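/- arXiv:2402.15774 — 9 statements merged into one kernel-verified Lean document; each statement's English description precedes it below -/
import Mathlib

section
/- Let T = T(l) be a tree (finite or infinite) with a vertex labeling l : V(T) → [0,∞), and let d_l : V(T) × V(T) → [0,∞) be defined by d_l(u,v) = 0 if u = v and d_l(u,v) = max_{w ∈ V(P)} l(w) otherwise, where P is the unique path joining u and v in T. Then d_l is an ultrametric on V(T) if and only if the inequality max{l(u), l(v)} > 0 holds for every edge {u,v} of T. -/
open SimpleGraph

/-- `d` is an ultrametric on `V`: a metric satisfying the strong triangle inequality. -/
def IsUltrametricOn {V : Type*} (d : V → V → ℝ) : Prop :=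
  (∀ x y, 0 ≤ d x y) ∧ (∀ x y, d x y = d y x) ∧
    (∀ x y, d x y = 0 ↔ x = y) ∧
    ∀ x y z, d x y ≤ max (d x z) (d z y)

/-- The vertex labeling `l` of the graph `G` is non-degenerate:
`max {l u, l v} > 0` for every edge `{u, v}`. -/
def NondegenerateLabeling {V : Type*} (G : SimpleGraph V) (l : V → ℝ) : Prop :=
  ∀ u v, G.Adj u v → 0 < max (l u) (l v)

/-- `d` is the function `d_l` generated by the vertex labeling `l` on the tree `G`:
`d u u = 0`, and for `u ≠ v`, `d u v` is the maximum of the labels of the vertices of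
the (unique) path joining `u` and `v`. -/
def IsLabelDist {V : Type*} (G : SimpleGraph V) (l : V → ℝ) (d : V → V → ℝ) : Prop :=
  (∀ u, d u u = 0) ∧
    ∀ u v : V, u ≠ v → ∀ p : G.Walk u v, p.IsPath →
      IsGreatest (l '' {w | w ∈ p.support}) (d u v)

/-- `x` is a Cauchy sequence with respect to the distance function `d`. -/
def CauchyWith {V : Type*} (d : V → V → ℝ) (x : ℕ → V) : Prop :=
  ∀ ε : ℝ, 0 < ε → ∃ N : ℕ, ∀ m ≥ N, ∀ n ≥ N, d (x m) (x n) < ε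

/-- The set `A` is totally bounded with respect to the distance function `d`:
for every `r > 0` it is covered by finitely many open balls of radius `r` centered in `A`. -/
def TotallyBoundedWith {V : Type*} (d : V → V → ℝ) (A : Set V) : Prop :=
  ∀ r : ℝ, 0 < r → ∃ s : Finset V, ↑s ⊆ A ∧ ∀ x ∈ A, ∃ c ∈ s, d c x < r

/-- The space `V` with distance `d` is compact: every cover of `V` by open balls
(given by center–radius pairs) contains a finite subcover. -/
def CompactWith {V : Type*} (d : V → V → ℝ) : Prop :=
  ∀ F : Set (V × ℝ), (∀ x : V, ∃ p ∈ F, d p.1 x < p.2) →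
    ∃ s : Finset (V × ℝ), ↑s ⊆ F ∧ ∀ x : V, ∃ p ∈ s, d p.1 x < p.2

/-- The subgraph `R` of `G` is a ray: its vertices can be enumerated as a sequence
`f 0, f 1, …` of pairwise distinct vertices, with edges exactly `{f n, f (n+1)}`. -/
def IsRaySubgraph {V : Type*} {G : SimpleGraph V} (R : G.Subgraph) : Prop :=
  ∃ f : ℕ → V, Function.Injective f ∧ R.verts = Set.range f ∧
    ∀ x y, R.Adj x y ↔ ∃ n, (x = f n ∧ y = f (n + 1)) ∨ (x = f (n + 1) ∧ y = f n)

/-- The subgraph `T₀` of `G` is a finite subtree. -/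
def IsFiniteSubtree {V : Type*} {G : SimpleGraph V} (T₀ : G.Subgraph) : Prop :=
  T₀.verts.Finite ∧ T₀.coe.IsTree

/-- The subgraph `H` of `G` is almost a ray: `H` is the union of a ray and a finite subtree. -/
def IsAlmostRaySubgraph {V : Type*} {G : SimpleGraph V} (H : G.Subgraph) : Prop :=
  ∃ R T₀ : G.Subgraph, IsRaySubgraph R ∧ IsFiniteSubtree T₀ ∧ T₀ ⊔ R = H

/-- The graph `G` is almost a ray: `G` is the union of a ray and a finite subtree. -/
def IsAlmostRayGraph {V : Type*} (G : SimpleGraph V) : Prop :=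
  ∃ R T₀ : G.Subgraph, IsRaySubgraph R ∧ IsFiniteSubtree T₀ ∧ T₀ ⊔ R = ⊤

/-- `H` is the convex hull of the vertex set `A` in `G`: a subtree containing `A`
which is a subgraph of every subtree of `G` containing `A`. -/
def IsConvexHullSubtree {V : Type*} (G : SimpleGraph V) (A : Set V) (H : G.Subgraph) : Prop :=
  H.coe.IsTree ∧ A ⊆ H.verts ∧
    ∀ H' : G.Subgraph, H'.coe.IsTree → A ⊆ H'.verts → H ≤ H'


/-- For a labeled tree `T = T(l)`, the function `d_l` is an ultrametric on
`V(T)` if and only if `max {l u, l v} > 0` for every edge `{u, v}` of `T`. -/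
theorem stmt0 {V : Type*} (G : SimpleGraph V) (hG : G.IsTree)
    (l : V → ℝ) (hl : ∀ v, 0 ≤ l v) (d : V → V → ℝ) (hd : IsLabelDist G l d) :
    IsUltrametricOn d ↔ NondegenerateLabeling G l := by
  obtain ⟨hd0, hdP⟩ := hd
  classical
  constructor
  · rintro ⟨hnn, hsymm, hzero, htri⟩ u v huv
    have hne : u ≠ v := huv.ne
    have hp := hdP u v hne (SimpleGraph.Path.singleton huv) (SimpleGraph.Path.singleton huv).2
    have h1 : d u v ≤ max (l u) (l v) := by
      obtain ⟨⟨w, hw, hwd⟩, _⟩ := hp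
      have : w = u ∨ w = v := by
        simpa [SimpleGraph.Path.singleton, SimpleGraph.Walk.support_cons] using hw
      rcases this with rfl | rfl
      · exact hwd ▸ le_max_left _ _
      · exact hwd ▸ le_max_right _ _
    have h2 : 0 < d u v :=
      lt_of_le_of_ne (hnn u v) (fun h => hne ((hzero u v).mp h.symm))
    exact lt_of_lt_of_le h2 h1
  · intro hnd
    have hpath : ∀ u v : V, ∃ p : G.Walk u v, p.IsPath := by
      intro u v
      obtain ⟨p⟩ := hG.isConnected.preconnected u v
      exact ⟨p.toPath, p.toPath.2⟩
    have hnn : ∀ x y, 0 ≤ d x y := by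
      intro x y
      by_cases h : x = y
      · subst h; rw [hd0]
      · obtain ⟨p, hp⟩ := hpath x y
        obtain ⟨⟨w, _, hw⟩, _⟩ := hdP x y h p hp
        exact hw ▸ hl w
    have hpos : ∀ x y, x ≠ y → 0 < d x y := by
      intro x y hxy
      obtain ⟨p, hp⟩ := hpath x y
      cases p with
      | nil => exact absurd rfl hxy
      | @cons _ v' _ h q =>
        obtain ⟨_, hub⟩ := hdP x y hxy (SimpleGraph.Walk.cons h q) hp
        have hx : l x ≤ d x y := hub ⟨x, by simp, rfl⟩
        have hw : l v' ≤ d x y := hub ⟨v', by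
          simp [SimpleGraph.Walk.support_cons, SimpleGraph.Walk.start_mem_support], rfl⟩
        exact lt_of_lt_of_le (hnd x v' h) (max_le hx hw)
    refine ⟨hnn, ?_, ?_, ?_⟩
    · intro x y
      by_cases h : x = y
      · subst h; rfl
      · obtain ⟨p, hp⟩ := hpath x y
        have h1 := hdP x y h p hp
        have h2 := hdP y x (Ne.symm h) p.reverse hp.reverse
        have hset : (l '' {w | w ∈ p.reverse.support}) = l '' {w | w ∈ p.support} := by
          congr 1
          ext w
          simp [SimpleGraph.Walk.support_reverse]
        rw [hset] at h2
        exact h1.unique h2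
    · intro x y
      constructor
      · intro h
        by_contra hxy
        exact (hpos x y hxy).ne' h
      · rintro rfl; exact hd0 x
    · intro x y z
      by_cases hxy : x = y
      · subst hxy; rw [hd0]; exact le_max_of_le_left (hnn x z)
      by_cases hxz : x = z
      · subst hxz; exact le_max_right _ _
      by_cases hzy : z = y
      · subst hzy; exact le_max_left _ _
      obtain ⟨p1, hp1⟩ := hpath x z
      obtain ⟨p2, hp2⟩ := hpath z y
      set q := (p1.append p2).toPath with hq
      obtain ⟨⟨w, hw, hwd⟩, _⟩ := hdP x y hxy q q.2
      have hw' : w ∈ (p1.append p2).support :=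
        SimpleGraph.Walk.support_toPath_subset _ hw
      rw [SimpleGraph.Walk.mem_support_append_iff] at hw'
      rcases hw' with hw1 | hw2
      · have := (hdP x z hxz p1 hp1).2 ⟨w, hw1, rfl⟩
        exact le_max_of_le_left (hwd ▸ this)
      · have := (hdP z y hzy p2 hp2).2 ⟨w, hw2, rfl⟩
        exact le_max_of_le_right (hwd ▸ this)
end

section
/- Let R = (v_1, v_2, ...) be a ray and let l : V(R) → [0,∞) be a non-degenerate labeling. Let (u_n)_{n ∈ ℕ} be a sequence of points of V(R) with u_{n_1} ≠ u_{n_2} whenever n_1 ≠ n_2. Then (u_n)_{n ∈ ℕ} is a Cauchy sequence in the ultrametric space (V(R), d_l) if and only if (v_m)_{m ∈ ℕ} is a Cauchy sequence in this space. -/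
open SimpleGraph

/-! On a ray, `d (v i) (v j)` is the largest label on the segment between `v i` and `v j`.
Hence a sequence `v ∘ k` with `k` injective, whose indices therefore tend to infinity, is Cauchy
exactly when the labels `l (v t)` are eventually below every `ε > 0`, a condition that does not
depend on `k`. Every injective sequence of vertices has this form. -/

open Set Filter Function

namespace SimpleGraph

variable {V : Type*} {G : SimpleGraph V} {v : ℕ → V}

def rayWalk (hadj : ∀ n, G.Adj (v n) (v (n + 1))) (i : ℕ) : (n : ℕ) → G.Walk (v i) (v (i + n))
  | 0 => Walk.nil
  | n + 1 => (rayWalk hadj i n).concat (hadj (i + n))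

lemma support_rayWalk (hadj : ∀ n, G.Adj (v n) (v (n + 1))) (i n : ℕ) :
    (rayWalk hadj i n).support = (List.range (n + 1)).map (fun t => v (i + t)) := by
  induction n with
  | zero => simp [rayWalk]
  | succ n ih => simp [rayWalk, Walk.support_concat, ih, List.range_succ]

lemma setOf_mem_support_rayWalk (hadj : ∀ n, G.Adj (v n) (v (n + 1))) (i n : ℕ) :
    {w | w ∈ (rayWalk hadj i n).support} = v '' Icc i (i + n) := by
  ext w
  simp only [mem_ofPred_eq, support_rayWalk, List.mem_map, List.mem_range, mem_image, mem_Icc]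
  constructor
  · rintro ⟨t, ht, rfl⟩
    exact ⟨i + t, ⟨by omega, by omega⟩, rfl⟩
  · rintro ⟨t, ⟨hit, hti⟩, rfl⟩
    exact ⟨t - i, by omega, by congr 1; omega⟩

lemma isPath_rayWalk (hv : Injective v) (hadj : ∀ n, G.Adj (v n) (v (n + 1))) (i n : ℕ) :
    (rayWalk hadj i n).IsPath := by
  rw [Walk.isPath_def, support_rayWalk]
  exact List.nodup_range.map fun a b hab => by have := hv hab; omega

variable {l : V → ℝ} {d : V → V → ℝ}

lemma isGreatest_labelDist_Icc (hv : Injective v) (hadj : ∀ n, G.Adj (v n) (v (n + 1)))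
    (hd : IsLabelDist G l d) {i n : ℕ} (hn : 0 < n) :
    IsGreatest ((l ∘ v) '' Icc i (i + n)) (d (v i) (v (i + n))) ∧
      IsGreatest ((l ∘ v) '' Icc i (i + n)) (d (v (i + n)) (v i)) := by
  have hne : v i ≠ v (i + n) := fun h => by have := hv h; omega
  have hpath := isPath_rayWalk hv hadj i n
  rw [image_comp, ← setOf_mem_support_rayWalk hadj]
  refine ⟨hd.2 _ _ hne _ hpath, ?_⟩
  simpa only [Walk.support_reverse, List.mem_reverse] using hd.2 _ _ hne.symm _ hpath.reverse

lemma isGreatest_labelDist_uIcc (hv : Injective v) (hadj : ∀ n, G.Adj (v n) (v (n + 1)))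
    (hd : IsLabelDist G l d) {i j : ℕ} (hij : i ≠ j) :
    IsGreatest ((l ∘ v) '' uIcc i j) (d (v i) (v j)) := by
  rcases hij.lt_or_gt with h | h
  · obtain ⟨n, rfl⟩ := Nat.exists_eq_add_of_le h.le
    rw [uIcc_of_le h.le]
    exact (isGreatest_labelDist_Icc hv hadj hd (by omega)).1
  · obtain ⟨n, rfl⟩ := Nat.exists_eq_add_of_le h.le
    rw [uIcc_of_ge h.le]
    exact (isGreatest_labelDist_Icc hv hadj hd (by omega)).2

theorem cauchyWith_comp_iff (hv : Injective v) (hadj : ∀ n, G.Adj (v n) (v (n + 1)))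
    (hd : IsLabelDist G l d) {k : ℕ → ℕ} (hk : Injective k) :
    CauchyWith d (v ∘ k) ↔ ∀ ε > 0, ∀ᶠ t in atTop, l (v t) < ε := by
  have hk_tendsto : Tendsto k atTop atTop := Nat.cofinite_eq_atTop ▸ hk.tendsto_cofinite
  constructor
  · intro hc ε hε
    obtain ⟨N, hN⟩ := hc ε hε
    refine eventually_atTop.2 ⟨k N, fun t ht => ?_⟩
    obtain ⟨n, hn, hkn⟩ :=
      ((eventually_ge_atTop N).and (hk_tendsto.eventually_gt_atTop t)).exists
    have hg := isGreatest_labelDist_uIcc hv hadj hd (i := k N) (j := k n) (by omega)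
    calc l (v t) ≤ d (v (k N)) (v (k n)) := hg.2 ⟨t, mem_uIcc.2 (.inl ⟨ht, hkn.le⟩), rfl⟩
      _ < ε := hN N le_rfl n hn
  · intro hl ε hε
    obtain ⟨M, hM⟩ := eventually_atTop.1 (hl ε hε)
    obtain ⟨N, hN⟩ := eventually_atTop.1 (hk_tendsto.eventually_ge_atTop M)
    refine ⟨N, fun m hm n hn => ?_⟩
    by_cases hmn : k m = k n
    · simpa [hmn, hd.1] using hε
    · obtain ⟨t, ht, hdt⟩ := (isGreatest_labelDist_uIcc hv hadj hd hmn).1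
      have := hN m hm
      have := hN n hn
      rw [comp_apply, comp_apply, ← hdt]
      exact hM t (by rw [mem_uIcc] at ht; omega)

end SimpleGraph

theorem stmt6_general {V : Type*} (G : SimpleGraph V) (v : ℕ → V) (hv : Function.Bijective v)
    (hadj : ∀ x y, G.Adj x y ↔ ∃ n, (x = v n ∧ y = v (n + 1)) ∨ (x = v (n + 1) ∧ y = v n))
    (l : V → ℝ)
    (d : V → V → ℝ) (hd : IsLabelDist G l d)
    (u : ℕ → V) (hu : Function.Injective u) :
    CauchyWith d u ↔ CauchyWith d v := by
  have hray : ∀ n, G.Adj (v n) (v (n + 1)) := fun n => (hadj _ _).2 ⟨n, .inl ⟨rfl, rfl⟩⟩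
  let e := Equiv.ofBijective v hv
  have hu_eq : u = v ∘ (e.symm ∘ u) := funext fun n => (e.apply_symm_apply (u n)).symm
  rw [hu_eq]
  exact (cauchyWith_comp_iff hv.1 hray hd (e.symm.injective.comp hu)).trans
    (cauchyWith_comp_iff hv.1 hray hd injective_id).symm

/-- For a ray `R = (v 0, v 1, …)` with non-degenerate labeling `l` and a
sequence `u` of pairwise distinct vertices of `R`, the sequence `u` is Cauchy in
`(V(R), d_l)` iff the sequence `v` is Cauchy in this space. -/
theorem stmt6 {V : Type*} (G : SimpleGraph V) (v : ℕ → V) (hv : Function.Bijective v)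
    (hadj : ∀ x y, G.Adj x y ↔ ∃ n, (x = v n ∧ y = v (n + 1)) ∨ (x = v (n + 1) ∧ y = v n))
    (l : V → ℝ) (hl : ∀ w, 0 ≤ l w) (hnd : NondegenerateLabeling G l)
    (d : V → V → ℝ) (hd : IsLabelDist G l d)
    (u : ℕ → V) (hu : Function.Injective u) :
    CauchyWith d u ↔ CauchyWith d v :=
  stmt6_general G v hv hadj l d hd u hu
end

section
/- Let T = T(l) be a labeled tree with a non-degenerate labeling l : V(T) → [0,∞). If the ultrametric space (V(T), d_l) is totally bounded, then the set V(T) is at most countable. -/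
open SimpleGraph

/-- If `T = T(l)` is a labeled tree with non-degenerate labeling and the
ultrametric space `(V(T), d_l)` is totally bounded, then `V(T)` is at most countable. -/
theorem stmt7 {V : Type*} (G : SimpleGraph V) (hG : G.IsTree)
    (l : V → ℝ) (hl : ∀ w, 0 ≤ l w) (hnd : NondegenerateLabeling G l)
    (d : V → V → ℝ) (hd : IsLabelDist G l d)
    (htb : TotallyBoundedWith d Set.univ) : Countable V := by
  classical
  rcases subsingleton_or_nontrivial V with h | h
  · exact inferInstance
  -- basic facts about d
  have hconn : G.Preconnected := hG.isConnected.preconnected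
  -- for x ≠ y, both endpoint labels are ≤ d x y
  have hend : ∀ x y : V, x ≠ y → l x ≤ d x y ∧ l y ≤ d x y := by
    intro x y hxy
    obtain ⟨p⟩ := hconn x y
    have hq := hd.2 x y hxy p.toPath.val p.toPath.property
    constructor
    · exact hq.2 ⟨x, Walk.start_mem_support _, rfl⟩
    · exact hq.2 ⟨y, Walk.end_mem_support _, rfl⟩
  have hsymm : ∀ x y : V, d x y = d y x := by
    intro x y
    rcases eq_or_ne x y with rfl | hxy
    · rfl
    obtain ⟨p⟩ := hconn x y
    have h1 := hd.2 x y hxy p.toPath.val p.toPath.property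
    have h2 := hd.2 y x hxy.symm p.toPath.val.reverse p.toPath.property.reverse
    have hsets : (l '' {w | w ∈ p.toPath.val.reverse.support}) =
        (l '' {w | w ∈ p.toPath.val.support}) := by
      ext w
      simp [Walk.support_reverse]
    rw [hsets] at h2
    exact h1.unique h2
  have hultra : ∀ x y z : V, x ≠ y → d x y ≤ max (d x z) (d z y) := by
    intro x y z hxy
    rcases eq_or_ne x z with rfl | hxz
    · rw [hd.1]
      simp
    rcases eq_or_ne z y with rfl | hzy
    · rw [hd.1]
      simp
    obtain ⟨p'⟩ := hconn x z
    obtain ⟨q'⟩ := hconn z y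
    set p : G.Walk x z := p'.toPath.val with hp
    set q : G.Walk z y := q'.toPath.val with hq
    set w : G.Walk x y := p.append q with hw
    have hr := hd.2 x y hxy w.toPath.val w.toPath.property
    obtain ⟨v, hv, hlv⟩ := hr.1
    have hv' : v ∈ w.support := Walk.support_toPath_subset w hv
    rw [hw, Walk.mem_support_append_iff] at hv'
    rcases hv' with hv' | hv'
    · have := (hd.2 x z hxz p p'.toPath.property).2 ⟨v, hv', rfl⟩
      exact le_max_of_le_left (hlv ▸ this)
    · have := (hd.2 z y hzy q q'.toPath.property).2 ⟨v, hv', rfl⟩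
      exact le_max_of_le_right (hlv ▸ this)
  -- points with big labels form a finite set
  have hbig : ∀ r : ℝ, 0 < r → {x : V | r ≤ l x}.Finite := by
    intro r hr
    obtain ⟨s, -, hs⟩ := htb r hr
    apply Set.Finite.subset s.finite_toSet
    intro x hx
    obtain ⟨c, hc, hcx⟩ := hs x (Set.mem_univ x)
    rcases eq_or_ne c x with rfl | hne
    · exact hc
    · exact absurd hcx (not_lt.2 (le_trans hx ((hend c x hne).2)))
  have hPcount : {x : V | 0 < l x}.Countable := by
    have hsub : {x : V | 0 < l x} ⊆ ⋃ n : ℕ, {x : V | 1 / (n + 1) ≤ l x} := by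
      intro x hx
      obtain ⟨n, hn⟩ := exists_nat_one_div_lt (show (0:ℝ) < l x from hx)
      exact Set.mem_iUnion.2 ⟨n, le_of_lt hn⟩
    refine Set.Countable.mono hsub (Set.countable_iUnion fun n => ?_)
    refine (hbig (1 / (n + 1)) ?_).countable
    positivity
  -- zero-label neighbors of a fixed positive vertex form a finite set
  have hNfin : ∀ w : V, 0 < l w → {x : V | G.Adj x w ∧ l x = 0}.Finite := by
    intro w hw
    obtain ⟨s, -, hs⟩ := htb (l w) hw
    -- distance between two distinct such neighbors is exactly l w
    have hdist : ∀ x x' : V, x ≠ x' → G.Adj x w → G.Adj x' w → l x = 0 → l x' = 0 →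
        d x x' = l w := by
      intro x x' hne hx hx' hlx hlx'
      have hpath : (Walk.cons hx (Walk.cons hx'.symm Walk.nil)).IsPath := by
        rw [Walk.isPath_def]
        simp [hx.ne, hx'.ne', hne]
      have hg := hd.2 x x' hne _ hpath
      have hub : d x x' ≤ l w := by
        obtain ⟨v, hv, hlv⟩ := hg.1
        simp only [Walk.support_cons, Walk.support_nil, Set.mem_setOf_eq,
          List.mem_cons, List.mem_singleton] at hv
        rcases hv with rfl | rfl | rfl | h
        · rw [← hlv, hlx]; exact le_of_lt hw
        · rw [← hlv]
        · rw [← hlv, hlx']; exact le_of_lt hw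
        · simp at h
      have hlb : l w ≤ d x x' := hg.2 ⟨w, by simp [Walk.support_cons], rfl⟩
      exact le_antisymm hub hlb
    have hcover : {x : V | G.Adj x w ∧ l x = 0} ⊆
        ⋃ c ∈ (s : Set V), {x : V | G.Adj x w ∧ l x = 0 ∧ d c x < l w} := by
      intro x ⟨hx1, hx2⟩
      obtain ⟨c, hc, hcx⟩ := hs x (Set.mem_univ x)
      exact Set.mem_biUnion hc ⟨hx1, hx2, hcx⟩
    refine Set.Finite.subset (Set.Finite.biUnion s.finite_toSet fun c _ => ?_) hcover
    apply Set.Subsingleton.finite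
    intro x ⟨hx1, hx2, hx3⟩ x' ⟨hx'1, hx'2, hx'3⟩
    by_contra hne
    have h1 : d x x' = l w := hdist x x' hne hx1 hx'1 hx2 hx'2
    have h2 : d x x' ≤ max (d x c) (d c x') := hultra x x' c hne
    rw [hsymm x c] at h2
    have : d x x' < l w := lt_of_le_of_lt h2 (max_lt hx3 hx'3)
    rw [h1] at this
    exact lt_irrefl _ this
  -- zero-label points are covered by neighbors of positive points
  have hZcount : {x : V | l x = 0}.Countable := by
    have hsub : {x : V | l x = 0} ⊆
        ⋃ w ∈ {w : V | 0 < l w}, {x : V | G.Adj x w ∧ l x = 0} := by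
      intro x hx
      obtain ⟨y, hy⟩ := exists_ne x
      obtain ⟨p⟩ := hconn x y
      cases p with
      | nil => exact absurd rfl hy
      | cons hadj q =>
        rename_i b
        have hb : 0 < l b := by
          have := hnd x b hadj
          rw [Set.mem_setOf_eq] at hx
          rw [hx] at this
          simpa [hl b] using this
        exact Set.mem_biUnion hb ⟨hadj, hx⟩
    exact Set.Countable.mono hsub
      (Set.Countable.biUnion hPcount fun w hw => (hNfin w hw).countable)
  -- conclude
  rw [← Set.countable_univ_iff]
  have : (Set.univ : Set V) ⊆ {x : V | l x = 0} ∪ {x : V | 0 < l x} := by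
    intro x _
    rcases lt_or_eq_of_le (hl x) with h | h
    · exact Or.inr h
    · exact Or.inl h.symm
  exact Set.Countable.mono this (hZcount.union hPcount)
end

section
/- Let T be a tree, let (u_n)_{n ∈ ℕ} be a sequence of pairwise distinct vertices of T, and let H be the convex hull of {u_n : n ∈ ℕ} in T. If H is not almost a ray, then there is a non-degenerate labeling l : V(T) → [0,∞) such that the sequence (u_n)_{n ∈ ℕ} has a Cauchy subsequence in the ultrametric space (V(T), d_l) but the set {v ∈ V(T) : l(v) = 1} is infinite. -/
open SimpleGraph

/-!
Root the tree at `r = u 0` and call a vertex good if infinitely many of the paths from `r` to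
the `u m` pass through it. If some good vertex `v` has no good child, infinitely many `u m` leave
`v` through pairwise distinct neighbours; labelling `v` by `0` and the `k`-th even-numbered
branch by `1 / (k + 1)` makes the `u m` at their ends Cauchy, while the odd-numbered branches
keep label `1`.
Otherwise every good vertex has a good child, which produces a ray `g` from `r` through good
vertices. Label `g i` and everything hanging off the ray at `g i` on the way to a chosen `u m` by
`1 / (i + 1)`, and the rest by `1`. If infinitely many `u m` lie off the ray, they hang off at
unboundedly many places and the odd-numbered ones witness infinitely many labels `1`. If
infinitely many `u m` lie on the ray, the vertices off the ray have label `1`, and there are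
infinitely many of them because otherwise the hull would be the ray plus a finite tree.
-/

open Filter Topology

namespace SimpleGraph.IsTree

variable {V : Type*} {G : SimpleGraph V} (hG : G.IsTree)

noncomputable def path (x y : V) : G.Walk x y := (hG.existsUnique_path x y).choose

lemma isPath_path (x y : V) : (hG.path x y).IsPath := (hG.existsUnique_path x y).choose_spec.1

lemma eq_path {x y : V} {p : G.Walk x y} (hp : p.IsPath) : p = hG.path x y :=
  (hG.existsUnique_path x y).choose_spec.2 p hp

lemma path_self (x : V) : hG.path x x = .nil := (hG.eq_path .nil).symm

lemma length_path (x y : V) : (hG.path x y).length = G.dist x y := by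
  obtain ⟨p, hp, hlen⟩ := (hG.connected x y).exists_path_of_dist
  rw [← hG.eq_path hp, hlen]

lemma mem_path_comm {x y z : V} : z ∈ (hG.path x y).support ↔ z ∈ (hG.path y x).support := by
  rw [← hG.eq_path (hG.isPath_path y x).reverse, Walk.support_reverse, List.mem_reverse]

lemma support_path_subset {x y : V} (p : G.Walk x y) : (hG.path x y).support ⊆ p.support := by
  classical
  rw [← hG.eq_path p.bypass_isPath]
  exact p.support_bypass_subset_support

lemma path_toSubgraph_le {H : G.Subgraph} (hH : H.Connected) {x y : V} (hx : x ∈ H.verts)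
    (hy : y ∈ H.verts) : (hG.path x y).toSubgraph ≤ H := by
  classical
  obtain ⟨p, hp⟩ := (H.preconnected_iff_forall_exists_walk_subgraph.1 hH.preconnected) hx hy
  rw [← hG.eq_path p.bypass_isPath]
  exact Walk.toSubgraph_bypass_le_toSubgraph.trans hp

lemma mem_verts_of_mem_path {H : G.Subgraph} (hH : H.Connected) {x y z : V} (hx : x ∈ H.verts)
    (hy : y ∈ H.verts) (hz : z ∈ (hG.path x y).support) : z ∈ H.verts :=
  (hG.path_toSubgraph_le hH hx hy).1 ((hG.path x y).mem_verts_toSubgraph.2 hz)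

lemma path_append {x y z : V} (hy : y ∈ (hG.path x z).support) :
    (hG.path x y).append (hG.path y z) = hG.path x z := by
  classical
  rw [← hG.eq_path ((hG.isPath_path x z).takeUntil hy),
    ← hG.eq_path ((hG.isPath_path x z).dropUntil hy), Walk.take_spec]

lemma dist_add_dist_of_mem_path {x y z : V} (hy : y ∈ (hG.path x z).support) :
    G.dist x y + G.dist y z = G.dist x z := by
  rw [← hG.length_path, ← hG.length_path, ← hG.length_path, ← hG.path_append hy,
    Walk.length_append]

lemma mem_path_of_mem_path_left {x y z w : V} (hy : y ∈ (hG.path x z).support)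
    (hw : w ∈ (hG.path x y).support) : w ∈ (hG.path x z).support := by
  rw [← hG.path_append hy, Walk.mem_support_append_iff]
  exact Or.inl hw

lemma mem_path_of_mem_path_right {x y z w : V} (hy : y ∈ (hG.path x z).support)
    (hw : w ∈ (hG.path y z).support) : w ∈ (hG.path x z).support := by
  rw [← hG.path_append hy, Walk.mem_support_append_iff]
  exact Or.inr hw

lemma eq_of_mem_path_of_mem_path {x y z w : V} (hy : y ∈ (hG.path x z).support)
    (h₁ : w ∈ (hG.path x y).support) (h₂ : w ∈ (hG.path y z).support) : w = y := by
  have hnodup := (hG.isPath_path x z).support_nodup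
  rw [← hG.path_append hy, Walk.support_append] at hnodup
  by_contra hne
  rw [← (hG.path y z).cons_tail_support, List.mem_cons] at h₂
  exact List.disjoint_of_nodup_append hnodup h₁ (h₂.resolve_left hne)

lemma snd_path_of_mem_path {x y z : V} (hz : z ∈ (hG.path x y).support) (hzx : z ≠ x) :
    (hG.path x z).snd = (hG.path x y).snd := by
  classical
  rw [← hG.eq_path ((hG.isPath_path x y).takeUntil hz)]
  exact Walk.snd_takeUntil hzx _ hz

variable {r : V}

lemma dist_le_of_mem_path {a x : V} (ha : a ∈ (hG.path r x).support) :
    G.dist r a ≤ G.dist r x := by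
  rw [← hG.dist_add_dist_of_mem_path ha]
  exact Nat.le_add_right _ _

lemma mem_path_of_mem_path_of_mem_path {a x y : V} (ha : a ∈ (hG.path r y).support)
    (hx : x ∈ (hG.path a y).support) : a ∈ (hG.path r x).support := by
  have hxy : x ∈ (hG.path r y).support := hG.mem_path_of_mem_path_right ha hx
  rw [← hG.path_append hxy, Walk.mem_support_append_iff] at ha
  refine ha.elim id fun h => ?_
  rw [hG.eq_of_mem_path_of_mem_path hx (hG.path a x).start_mem_support h]
  exact (hG.path r x).end_mem_support

lemma mem_path_or_mem_path {a b x : V} (ha : a ∈ (hG.path r x).support)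
    (hb : b ∈ (hG.path r x).support) :
    b ∈ (hG.path r a).support ∨ a ∈ (hG.path r b).support := by
  rw [← hG.path_append ha, Walk.mem_support_append_iff] at hb
  exact hb.imp_right (hG.mem_path_of_mem_path_of_mem_path ha)

lemma mem_path_root_or_mem_path_root {x y z : V} (hx : x ∈ (hG.path y z).support) :
    x ∈ (hG.path r y).support ∨ x ∈ (hG.path r z).support := by
  have := hG.support_path_subset ((hG.path y r).append (hG.path r z)) hx
  rwa [Walk.mem_support_append_iff, hG.mem_path_comm] at this

lemma mem_path_of_mem_path_of_mem_path_root {a x y z : V} (hy : a ∈ (hG.path r y).support)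
    (hz : a ∈ (hG.path r z).support) (hx : x ∈ (hG.path y z).support) :
    a ∈ (hG.path r x).support := by
  have := hG.support_path_subset ((hG.path y a).append (hG.path a z)) hx
  rw [Walk.mem_support_append_iff, hG.mem_path_comm] at this
  exact this.elim (hG.mem_path_of_mem_path_of_mem_path hy) (hG.mem_path_of_mem_path_of_mem_path hz)

lemma mem_path_or_mem_path_of_adj {x y : V} (hxy : G.Adj x y) :
    x ∈ (hG.path r y).support ∨ y ∈ (hG.path r x).support := by
  by_cases hy : y ∈ (hG.path r x).support
  · exact Or.inr hy
  · exact Or.inl (hG.isAcyclic.mem_support_of_ne_mem_support_of_adj_of_isPath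
      (hG.isPath_path r y) (hG.isPath_path r x) hxy.symm hy)

variable (r) in
structure IsRayFrom (g : ℕ → V) : Prop where
  zero : g 0 = r
  adj : ∀ k, G.Adj (g k) (g (k + 1))
  mem_path : ∀ k, g k ∈ (hG.path r (g (k + 1))).support

lemma exists_isRayFrom {P : V → Prop} (hr : P r)
    (h : ∀ v, P v → ∃ w, G.Adj v w ∧ v ∈ (hG.path r w).support ∧ P w) :
    ∃ g : ℕ → V, hG.IsRayFrom r g ∧ ∀ k, P (g k) := by
  choose! next hadj hmem hnext using h
  have hP : ∀ k, P (next^[k] r) := fun k => by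
    induction k with
    | zero => exact hr
    | succ k ih => rw [Function.iterate_succ_apply']; exact hnext _ ih
  refine ⟨fun k => next^[k] r, ⟨rfl, fun k => ?_, fun k => ?_⟩, hP⟩ <;>
    rw [Function.iterate_succ_apply']
  exacts [hadj _ (hP k), hmem _ (hP k)]

variable (r) in
open Classical in
/-- The path from `r` to `w` leaves the ray `g` at `g (rayIndex r g w)`. -/
noncomputable def rayIndex (g : ℕ → V) (w : V) : ℕ :=
  Nat.findGreatest (fun i => g i ∈ (hG.path r w).support) (G.dist r w)

namespace IsRayFrom

variable {hG} {g : ℕ → V} (hg : hG.IsRayFrom r g)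
include hg

lemma path_succ (k : ℕ) : hG.path r (g (k + 1)) = (hG.path r (g k)).concat (hg.adj k) :=
  hG.isAcyclic.path_concat (hG.isPath_path _ _) (hG.isPath_path _ _) _ (hg.mem_path k)

lemma dist_eq (k : ℕ) : G.dist r (g k) = k := by
  induction k with
  | zero => rw [hg.zero, dist_self]
  | succ k ih => rw [← hG.length_path, hg.path_succ, Walk.length_concat, hG.length_path, ih]

lemma injective : Function.Injective g := fun i j h => by
  rw [← hg.dist_eq i, ← hg.dist_eq j, h]

lemma mem_path_iff {k : ℕ} {x : V} :
    x ∈ (hG.path r (g k)).support ↔ ∃ i ≤ k, g i = x := by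
  induction k generalizing x with
  | zero => rw [hg.zero, hG.path_self]; simp [hg.zero, eq_comm]
  | succ k ih =>
    rw [hg.path_succ, Walk.support_concat, List.mem_append, List.mem_singleton, ih]
    constructor
    · rintro (⟨i, hi, rfl⟩ | rfl)
      exacts [⟨i, by omega, rfl⟩, ⟨k + 1, le_rfl, rfl⟩]
    · rintro ⟨i, hi, rfl⟩
      obtain hi | rfl := Nat.le_succ_iff.1 hi
      exacts [Or.inl ⟨i, by omega, rfl⟩, Or.inr rfl]

lemma succ_or_succ_of_adj {i j : ℕ} (h : G.Adj (g i) (g j)) : i = j + 1 ∨ j = i + 1 := by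
  simpa only [hg.dist_eq] using hG.dist_eq_dist_add_one_of_adj r h

lemma mem_path_rayIndex (w : V) : g (hG.rayIndex r g w) ∈ (hG.path r w).support := by
  classical
  refine Nat.findGreatest_spec (P := fun i => g i ∈ (hG.path r w).support) (Nat.zero_le _) ?_
  rw [hg.zero]
  exact (hG.path r w).start_mem_support

lemma le_rayIndex {i : ℕ} {w : V} (h : g i ∈ (hG.path r w).support) : i ≤ hG.rayIndex r g w := by
  classical
  refine Nat.le_findGreatest (P := fun i => g i ∈ (hG.path r w).support) ?_ h
  rw [← hg.dist_eq i]
  exact hG.dist_le_of_mem_path h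

lemma rayIndex_apply (k : ℕ) : hG.rayIndex r g (g k) = k := by
  classical
  refine le_antisymm ?_ (hg.le_rayIndex (hG.path r (g k)).end_mem_support)
  exact (Nat.findGreatest_le (P := fun i => g i ∈ (hG.path r (g k)).support) _).trans
    (hg.dist_eq k).le

lemma rayIndex_mono {a x : V} (ha : a ∈ (hG.path r x).support) :
    hG.rayIndex r g a ≤ hG.rayIndex r g x :=
  hg.le_rayIndex (hG.mem_path_of_mem_path_left ha (hg.mem_path_rayIndex a))

lemma rayIndex_eq_of_mem_path {x y : V} (hy : y ∉ Set.range g) (hyx : y ∈ (hG.path r x).support) :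
    hG.rayIndex r g y = hG.rayIndex r g x := by
  refine le_antisymm (hg.rayIndex_mono hyx) ?_
  rcases hG.mem_path_or_mem_path hyx (hg.mem_path_rayIndex x) with h | h
  · exact hg.le_rayIndex h
  · obtain ⟨i, -, rfl⟩ := hg.mem_path_iff.1 h
    exact absurd ⟨i, rfl⟩ hy

end IsRayFrom

end SimpleGraph.IsTree

def HasCauchySubseqLabeling {V : Type*} (G : SimpleGraph V) (u : ℕ → V) : Prop :=
  ∃ l : V → ℝ, (∀ w, 0 ≤ l w) ∧ NondegenerateLabeling G l ∧ {w : V | l w = 1}.Infinite ∧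
    ∀ d : V → V → ℝ, IsLabelDist G l d → ∃ φ : ℕ → ℕ, StrictMono φ ∧ CauchyWith d (u ∘ φ)

section Labeling

variable {V : Type*} {G : SimpleGraph V}

lemma IsLabelDist.le_of_walk {l : V → ℝ} {d : V → V → ℝ} (hd : IsLabelDist G l d)
    (hl : ∀ w, 0 ≤ l w) {x y : V} (p : G.Walk x y) {c : ℝ} (hp : ∀ z ∈ p.support, l z ≤ c) :
    d x y ≤ c := by
  classical
  by_cases hxy : x = y
  · subst hxy
    rw [hd.1]
    exact (hl x).trans (hp x p.start_mem_support)
  · obtain ⟨z, hz, hzd⟩ := (hd.2 x y hxy p.bypass p.bypass_isPath).1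
    rw [← hzd]
    exact hp z (p.support_bypass_subset_support hz)

lemma cauchyWith_of_le_max {d : V → V → ℝ} {x : ℕ → V} {b : ℕ → ℝ}
    (hb : Tendsto b atTop (𝓝 0)) (h : ∀ j k, d (x j) (x k) ≤ max (b j) (b k)) :
    CauchyWith d x := by
  intro ε hε
  obtain ⟨N, hN⟩ := eventually_atTop.1 (hb.eventually (gt_mem_nhds hε))
  exact ⟨N, fun j hj k hk => (h j k).trans_lt (max_lt (hN j hj) (hN k hk))⟩

lemma hasCauchySubseqLabeling_of_walks {u : ℕ → V} {l : V → ℝ} (hl : ∀ w, 0 ≤ l w)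
    (hnd : NondegenerateLabeling G l) (hinf : {w | l w = 1}.Infinite) {n : ℕ → ℕ}
    (hn : StrictMono n) {b : ℕ → ℝ} (hb : Tendsto b atTop (𝓝 0))
    (hwalk : ∀ j k, ∃ p : G.Walk (u (n j)) (u (n k)), ∀ z ∈ p.support, l z ≤ max (b j) (b k)) :
    HasCauchySubseqLabeling G u :=
  ⟨l, hl, hnd, hinf, fun _ hd => ⟨n, hn, cauchyWith_of_le_max hb fun j k =>
    (hwalk j k).elim fun p hp => hd.le_of_walk hl p hp⟩⟩

end Labeling

lemma exists_strictMono_injective_comp {β : Type*} (c : ℕ → β) {B : Set ℕ}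
    (hB : (c '' B).Infinite) :
    ∃ n : ℕ → ℕ, StrictMono n ∧ (∀ k, n k ∈ B) ∧ Function.Injective (c ∘ n) := by
  obtain ⟨B', hB'B, hbij⟩ := Set.exists_subset_bijOn B c
  have hinf : B'.Infinite := fun hfin => hB (hbij.image_eq ▸ hfin.image c)
  have hmem := Nat.nth_mem_of_infinite hinf
  exact ⟨Nat.nth (· ∈ B'), Nat.nth_strictMono hinf, fun k => hB'B (hmem k),
    fun i j h => (Nat.nth_strictMono hinf).injective (hbij.injOn (hmem i) (hmem j) h)⟩

def SimpleGraph.Subgraph.ray {V : Type*} {G : SimpleGraph V} (g : ℕ → V)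
    (hg : ∀ k, G.Adj (g k) (g (k + 1))) : G.Subgraph where
  verts := Set.range g
  Adj x y := ∃ k, (x = g k ∧ y = g (k + 1)) ∨ (x = g (k + 1) ∧ y = g k)
  adj_sub := by
    rintro _ _ ⟨k, ⟨rfl, rfl⟩ | ⟨rfl, rfl⟩⟩
    exacts [hg k, (hg k).symm]
  edge_vert := by
    rintro _ _ ⟨k, ⟨rfl, -⟩ | ⟨rfl, -⟩⟩
    exacts [⟨k, rfl⟩, ⟨k + 1, rfl⟩]
  symm := ⟨fun _ _ ⟨k, h⟩ => ⟨k, h.symm.imp And.symm And.symm⟩⟩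

namespace SimpleGraph.IsTree

variable {V : Type*} {G : SimpleGraph V} (hG : G.IsTree)

include hG in
lemma adj_of_mem_verts {H : G.Subgraph} (hH : H.Connected) {x y : V} (hx : x ∈ H.verts)
    (hy : y ∈ H.verts) (hxy : G.Adj x y) : H.Adj x y := by
  have h := hG.path_toSubgraph_le hH hx hy
  rw [← hG.eq_path hxy.isPath_toWalk, Adj.toSubgraph_toWalk] at h
  exact h.2 (by simp)

open Classical in
noncomputable def branchLabel (v : V) (w : ℕ → V) (x : V) : ℝ :=
  if x = v then 0 else if h : ∃ k, (hG.path v x).snd = w k then 1 / (Nat.find h + 1) else 1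

lemma branchLabel_pos {v x : V} {w : ℕ → V} (hx : x ≠ v) : 0 < hG.branchLabel v w x := by
  rw [branchLabel, if_neg hx]
  split_ifs <;> positivity

lemma branchLabel_nonneg (v : V) (w : ℕ → V) (x : V) : 0 ≤ hG.branchLabel v w x := by
  by_cases hx : x = v
  · rw [branchLabel, if_pos hx]
  · exact (hG.branchLabel_pos hx).le

lemma nondegenerateLabeling_branchLabel (v : V) (w : ℕ → V) :
    NondegenerateLabeling G (hG.branchLabel v w) := by
  intro a b hab
  by_cases ha : a = v
  · exact lt_max_of_lt_right (hG.branchLabel_pos (ha ▸ hab.ne'))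
  · exact lt_max_of_lt_left (hG.branchLabel_pos ha)

lemma branchLabel_eq_one {v x : V} {w : ℕ → V} (hx : x ≠ v)
    (hw : ∀ k, (hG.path v x).snd ≠ w k) : hG.branchLabel v w x = 1 := by
  rw [branchLabel, if_neg hx, dif_neg (not_exists.2 hw)]

lemma branchLabel_of_mem_path {v y z : V} {w : ℕ → V} (hw : Function.Injective w) {k : ℕ}
    (hy : (hG.path v y).snd = w k) (hz : z ∈ (hG.path v y).support) (hzv : z ≠ v) :
    hG.branchLabel v w z = 1 / (k + 1) := by
  classical
  have hzk : (hG.path v z).snd = w k := (hG.snd_path_of_mem_path hz hzv).trans hy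
  have h : ∃ k, (hG.path v z).snd = w k := ⟨k, hzk⟩
  rw [branchLabel, if_neg hzv, dif_pos h, hw ((Nat.find_spec h).symm.trans hzk)]

theorem hasCauchySubseqLabeling_of_infinite_image_snd {u : ℕ → V} (v : V)
    (h : ((fun m => (hG.path v (u m)).snd) '' {m | u m ≠ v}).Infinite) :
    HasCauchySubseqLabeling G u := by
  obtain ⟨n, hn, hnv, hinj⟩ := exists_strictMono_injective_comp _ h
  set w : ℕ → V := fun k => (hG.path v (u (n (2 * k)))).snd
  have hw : Function.Injective w := hinj.comp (mul_right_injective₀ two_ne_zero)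
  have hodd : Function.Injective fun k => u (n (2 * k + 1)) := fun a b hab => by
    have := hinj (congrArg (fun y => (hG.path v y).snd) hab)
    omega
  refine hasCauchySubseqLabeling_of_walks (hG.branchLabel_nonneg v w)
    (hG.nondegenerateLabeling_branchLabel v w) ?_ (hn.comp (strictMono_mul_left_of_pos two_pos))
    tendsto_one_div_add_atTop_nhds_zero_nat fun j k => ?_
  · refine (Set.infinite_range_of_injective hodd).mono ?_
    rintro _ ⟨k, rfl⟩
    refine hG.branchLabel_eq_one (hnv _) fun j hj => ?_
    have := hinj hj
    omega
  · refine ⟨(hG.path v (u (n (2 * j)))).reverse.append (hG.path v (u (n (2 * k)))),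
      fun z hz => ?_⟩
    by_cases hzv : z = v
    · rw [branchLabel, if_pos hzv]
      positivity
    rw [Walk.mem_support_append_iff, Walk.support_reverse, List.mem_reverse] at hz
    rcases hz with hz | hz
    · rw [hG.branchLabel_of_mem_path hw rfl hz hzv]
      exact le_max_left _ _
    · rw [hG.branchLabel_of_mem_path hw rfl hz hzv]
      exact le_max_right _ _

variable (r : V)

open Classical in
noncomputable def rayLabel (g x : ℕ → V) (w : V) : ℝ :=
  if ∃ k, w ∈ (hG.path r (x k)).support then 1 / (hG.rayIndex r g w + 1) else 1

variable {r}

lemma rayLabel_pos {g x : ℕ → V} (w : V) : 0 < hG.rayLabel r g x w := by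
  rw [rayLabel]
  split_ifs <;> positivity

lemma rayLabel_eq_one {g x : ℕ → V} {w : V} (hw : ∀ k, w ∉ (hG.path r (x k)).support) :
    hG.rayLabel r g x w = 1 := by
  classical
  rw [rayLabel, if_neg (not_exists.2 hw)]

namespace IsRayFrom

variable {hG} {g : ℕ → V} (hg : hG.IsRayFrom r g) {u : ℕ → V}
include hg

theorem hasCauchySubseqLabeling {n : ℕ → ℕ} (hn : StrictMono n)
    (hE : Function.Injective (hG.rayIndex r g ∘ u ∘ n))
    (hinf : {w | hG.rayLabel r g (u ∘ n) w = 1}.Infinite) : HasCauchySubseqLabeling G u := by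
  classical
  set E := hG.rayIndex r g ∘ u ∘ n
  refine hasCauchySubseqLabeling_of_walks (fun w => (hG.rayLabel_pos w).le)
    (fun a _ _ => lt_max_of_lt_left (hG.rayLabel_pos a)) hinf hn
    (tendsto_one_div_add_atTop_nhds_zero_nat.comp hE.nat_tendsto_atTop)
    fun j k => ⟨hG.path _ _, fun z hz => ?_⟩
  -- the path from `u (n j)` to `u (n k)` stays below the higher of `g (E j)`, `g (E k)`
  have key : ∀ i, g (E i) ∈ (hG.path r (u (n j))).support →
      g (E i) ∈ (hG.path r (u (n k))).support → hG.rayLabel r g (u ∘ n) z ≤ 1 / (E i + 1) := by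
    intro i hj hk
    have hL : ∃ i, z ∈ (hG.path r ((u ∘ n) i)).support :=
      (hG.mem_path_root_or_mem_path_root hz).elim (⟨j, ·⟩) (⟨k, ·⟩)
    rw [rayLabel, if_pos hL]
    gcongr
    exact hg.le_rayIndex (hG.mem_path_of_mem_path_of_mem_path_root hj hk hz)
  have hbelow : ∀ {i i'}, E i ≤ E i' → g (E i) ∈ (hG.path r (u (n i'))).support :=
    fun h => hG.mem_path_of_mem_path_left (hg.mem_path_rayIndex _) (hg.mem_path_iff.2 ⟨_, h, rfl⟩)
  rcases le_total (E j) (E k) with h | h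
  · exact (key j (hg.mem_path_rayIndex _) (hbelow h)).trans (le_max_left _ _)
  · exact (key k (hbelow h) (hg.mem_path_rayIndex _)).trans (le_max_right _ _)

theorem hasCauchySubseqLabeling_of_infinite_mem_range (hu : Function.Injective u)
    (hon : {m | u m ∈ Set.range g}.Infinite) (hcompl : (Set.range g)ᶜ.Infinite) :
    HasCauchySubseqLabeling G u := by
  have hinj : Set.InjOn (hG.rayIndex r g ∘ u) {m | u m ∈ Set.range g} := by
    rintro a ⟨i, hi⟩ b ⟨j, hj⟩ h
    simp only [Function.comp_apply, ← hi, ← hj, hg.rayIndex_apply] at h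
    exact hu (hi ▸ hj ▸ congrArg g h)
  obtain ⟨n, hn, hnB, hE⟩ := exists_strictMono_injective_comp _ (hon.image hinj)
  refine hg.hasCauchySubseqLabeling hn hE
    (hcompl.mono fun w hw => hG.rayLabel_eq_one fun k hk => ?_)
  obtain ⟨i, hi⟩ := hnB k
  rw [Function.comp_apply, ← hi] at hk
  obtain ⟨i', -, rfl⟩ := hg.mem_path_iff.1 hk
  exact hw ⟨i', rfl⟩

theorem hasCauchySubseqLabeling_of_finite_mem_range
    (hgood : ∀ K, {m | g K ∈ (hG.path r (u m)).support}.Infinite)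
    (hoff : {m | u m ∈ Set.range g}.Finite) : HasCauchySubseqLabeling G u := by
  have hunb : ¬ BddAbove ((hG.rayIndex r g ∘ u) '' {m | u m ∉ Set.range g}) := by
    rintro ⟨K, hK⟩
    obtain ⟨m, hm, hmoff⟩ := ((hgood (K + 1)).sdiff hoff).nonempty
    have := hK ⟨m, hmoff, rfl⟩
    have := hg.le_rayIndex hm
    simp only [Function.comp_apply] at *
    omega
  obtain ⟨n, hn, hnB, hE⟩ :=
    exists_strictMono_injective_comp _ (Set.infinite_of_not_bddAbove hunb)
  refine hg.hasCauchySubseqLabeling (hn.comp (strictMono_mul_left_of_pos two_pos))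
    (hE.comp (mul_right_injective₀ two_ne_zero)) ?_
  have hodd : Function.Injective fun k => u (n (2 * k + 1)) := fun a b hab => by
    have := hE (congrArg (hG.rayIndex r g) hab)
    omega
  refine (Set.infinite_range_of_injective hodd).mono ?_
  rintro _ ⟨k, rfl⟩
  refine hG.rayLabel_eq_one fun j hj => ?_
  have := @hE (2 * k + 1) (2 * j) (hg.rayIndex_eq_of_mem_path (hnB _) hj)
  omega

lemma finite_setOf_rayIndex_le (hfin : (Set.range g)ᶜ.Finite) (M : ℕ) :
    {w | hG.rayIndex r g w ≤ M}.Finite := by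
  refine (hfin.union ((Set.finite_Iic M).image g)).subset fun w hw => ?_
  by_cases h : w ∈ Set.range g
  · obtain ⟨i, rfl⟩ := h
    rw [Set.mem_ofPred, hg.rayIndex_apply] at hw
    exact Or.inr ⟨i, hw, rfl⟩
  · exact Or.inl h

lemma isTree_induce_rayIndex_le {H : G.Subgraph} (hH : H.Connected) (h0 : g 0 ∈ H.verts)
    (M : ℕ) : (H.induce {w | w ∈ H.verts ∧ hG.rayIndex r g w ≤ M}).coe.IsTree := by
  set T₀ := H.induce {w | w ∈ H.verts ∧ hG.rayIndex r g w ≤ M}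
  refine ⟨Subgraph.connected_iff'.1 ((T₀.connected_iff_forall_exists_walk_subgraph).2
    ⟨⟨g 0, h0, by simp [hg.rayIndex_apply]⟩, fun {x y} hx hy => ⟨hG.path x y, ?_⟩⟩),
    hG.isAcyclic.subgraph T₀⟩
  have hs : ∀ z ∈ (hG.path x y).support, z ∈ T₀.verts := fun z hz =>
    ⟨hG.mem_verts_of_mem_path hH hx.1 hy.1 hz,
      (hG.mem_path_root_or_mem_path_root (r := r) hz).elim
        (fun h => (hg.rayIndex_mono h).trans hx.2) (fun h => (hg.rayIndex_mono h).trans hy.2)⟩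
  refine ⟨fun z hz => hs z ((hG.path x y).mem_verts_toSubgraph.1 hz), fun a b hab => ?_⟩
  exact ⟨hs a ((hG.path x y).mem_support_of_adj_toSubgraph hab),
    hs b ((hG.path x y).mem_support_of_adj_toSubgraph hab.symm),
    (hG.path_toSubgraph_le hH hx.1 hy.1).2 hab⟩

theorem isAlmostRaySubgraph_of_finite_compl_range {H : G.Subgraph} (hH : H.Connected)
    (hgH : ∀ k, g k ∈ H.verts) (hfin : (Set.range g)ᶜ.Finite) : IsAlmostRaySubgraph H := by
  set e := hG.rayIndex r g
  have he : ∀ k, e (g k) = k := hg.rayIndex_apply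
  obtain ⟨M, hM⟩ : ∃ M, ∀ w ∉ Set.range g, e w ≤ M := by
    obtain ⟨M, hM⟩ := (hfin.image e).bddAbove
    exact ⟨M, fun w hw => hM ⟨w, hw, rfl⟩⟩
  have hray : ∀ {w}, M < e w → w ∈ Set.range g := fun h => by_contra fun hw => (hM _ hw).not_gt h
  set T₀ := H.induce {w | w ∈ H.verts ∧ e w ≤ M}
  set R := Subgraph.ray (fun k => g (M + k)) (fun k => hg.adj (M + k))
  have hR : ∀ {x y}, G.Adj x y → M < e y → R.Adj x y := by
    intro x y hxy hy
    obtain ⟨i, rfl⟩ := hray hy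
    obtain ⟨j, rfl⟩ : x ∈ Set.range g := by
      rcases hG.mem_path_or_mem_path_of_adj (r := r) hxy with h | h
      · obtain ⟨j, -, rfl⟩ := hg.mem_path_iff.1 h
        exact ⟨j, rfl⟩
      · exact hray (hy.trans_le (hg.rayIndex_mono h))
    rw [he] at hy
    rcases hg.succ_or_succ_of_adj hxy with rfl | rfl
    · exact ⟨i - M, Or.inr ⟨congrArg g (by omega), congrArg g (by omega)⟩⟩
    · exact ⟨j - M, Or.inl ⟨congrArg g (by omega), congrArg g (by omega)⟩⟩
  refine ⟨R, T₀, ⟨_, fun a b h => by simpa using hg.injective h, rfl, fun _ _ => Iff.rfl⟩,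
    ⟨(hg.finite_setOf_rayIndex_le hfin M).subset fun w hw => hw.2,
      hg.isTree_induce_rayIndex_le hH (hgH 0) M⟩, Subgraph.ext (Set.ext fun w => ⟨?_, fun hw => ?_⟩)
      (funext₂ fun x y => propext ⟨?_, fun h => ?_⟩)⟩
  · rintro (hw | ⟨k, rfl⟩)
    exacts [hw.1, hgH _]
  · by_cases hwM : e w ≤ M
    · exact Or.inl ⟨hw, hwM⟩
    · obtain ⟨i, rfl⟩ := hray (not_le.1 hwM)
      rw [he] at hwM
      exact Or.inr ⟨i - M, congrArg g (by omega)⟩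
  · rintro (h | ⟨k, ⟨rfl, rfl⟩ | ⟨rfl, rfl⟩⟩)
    · exact h.2.2
    · exact hG.adj_of_mem_verts hH (hgH _) (hgH _) (hg.adj _)
    · exact hG.adj_of_mem_verts hH (hgH _) (hgH _) (hg.adj _).symm
  · by_cases hx : M < e x
    · exact Or.inr (hR (H.adj_sub h).symm hx).symm
    by_cases hy : M < e y
    · exact Or.inr (hR (H.adj_sub h) hy)
    · exact Or.inl ⟨⟨H.edge_vert h, not_lt.1 hx⟩, ⟨H.edge_vert h.symm, not_lt.1 hy⟩, h⟩

end IsRayFrom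

theorem infinite_image_snd {u : ℕ → V} (hu : Function.Injective u) {v : V}
    (hv : {m | v ∈ (hG.path r (u m)).support}.Infinite)
    (hchild : ∀ w, G.Adj v w → v ∈ (hG.path r w).support →
      {m | w ∈ (hG.path r (u m)).support}.Finite) :
    ((fun m => (hG.path v (u m)).snd) '' {m | u m ≠ v}).Infinite := by
  set c := fun m => (hG.path v (u m)).snd
  set B := {m | v ∈ (hG.path r (u m)).support} \ {m | u m = v}
  have hB : B.Infinite := hv.sdiff (Set.Subsingleton.finite fun a ha b hb => hu (ha.trans hb.symm))
  have hcB : ∀ m ∈ B, G.Adj v (c m) ∧ v ∈ (hG.path r (c m)).support ∧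
      c m ∈ (hG.path r (u m)).support := by
    rintro m ⟨hvm, hmv⟩
    have hc : c m ∈ (hG.path v (u m)).support := (hG.path v (u m)).getVert_mem_support 1
    exact ⟨Walk.adj_snd (Walk.not_nil_of_ne (Ne.symm hmv)),
      hG.mem_path_of_mem_path_of_mem_path hvm hc, hG.mem_path_of_mem_path_right hvm hc⟩
  intro hfin
  have hfinB : (c '' B).Finite := hfin.subset (Set.image_mono fun m hm => hm.2)
  refine hB ((hfinB.biUnion fun w hw => ?_).subset fun m hm =>
    Set.mem_biUnion (t := fun w => {m' | w ∈ (hG.path r (u m')).support}) ⟨m, hm, rfl⟩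
      (hcB m hm).2.2)
  obtain ⟨m, hm, rfl⟩ := hw
  exact hchild _ (hcB m hm).1 (hcB m hm).2.1

end SimpleGraph.IsTree

/-- Let `u` be a sequence of pairwise distinct vertices of a tree `T` and
let `H` be the convex hull of its range. If `H` is not almost a ray, then there is a
non-degenerate labeling `l` such that `u` has a Cauchy subsequence in `(V(T), d_l)` but
the set `{v ∈ V(T) : l v = 1}` is infinite. -/
theorem stmt9 {V : Type*} (G : SimpleGraph V) (hG : G.IsTree)
    (u : ℕ → V) (hu : Function.Injective u)
    (H : G.Subgraph) (hH : IsConvexHullSubtree G (Set.range u) H)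
    (hnot : ¬ IsAlmostRaySubgraph H) :
    ∃ l : V → ℝ, (∀ w, 0 ≤ l w) ∧ NondegenerateLabeling G l ∧
      {w : V | l w = 1}.Infinite ∧
      ∀ d : V → V → ℝ, IsLabelDist G l d →
        ∃ φ : ℕ → ℕ, StrictMono φ ∧ CauchyWith d (u ∘ φ) := by
  set Good : V → Prop := fun v => {m | v ∈ (hG.path (u 0) (u m)).support}.Infinite
  by_cases hbranch : ∃ v, Good v ∧
      ∀ w, G.Adj v w → v ∈ (hG.path (u 0) w).support → ¬ Good w
  · obtain ⟨v, hv, hchild⟩ := hbranch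
    exact hG.hasCauchySubseqLabeling_of_infinite_image_snd v
      (hG.infinite_image_snd hu hv fun w hvw hw => Set.not_infinite.1 (hchild w hvw hw))
  push Not at hbranch
  have hroot : Good (u 0) := Set.infinite_univ.mono fun m _ => (hG.path _ _).start_mem_support
  obtain ⟨g, hg, hgood⟩ := hG.exists_isRayFrom hroot hbranch
  have hHconn : H.Connected := ⟨hH.1.connected⟩
  have hgH : ∀ k, g k ∈ H.verts := fun k =>
    let ⟨m, hm⟩ := (hgood k).nonempty
    hG.mem_verts_of_mem_path hHconn (hH.2.1 ⟨0, rfl⟩) (hH.2.1 ⟨m, rfl⟩) hm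
  by_cases hon : {m | u m ∈ Set.range g}.Infinite
  · exact hg.hasCauchySubseqLabeling_of_infinite_mem_range hu hon fun hfin =>
      hnot (hg.isAlmostRaySubgraph_of_finite_compl_range hHconn hgH hfin)
  · exact hg.hasCauchySubseqLabeling_of_finite_mem_range hgood (Set.not_infinite.1 hon)
end

section
/- Let T be an infinite tree such that for every non-degenerate labeling l : V(T) → [0,∞), the ultrametric space (V(T), d_l) is totally bounded if and only if there is an infinite totally bounded subset A ⊆ V(T). Then for every non-degenerate labeling l : V(T) → [0,∞), the ultrametric space (V(T), d_l) is not compact. -/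
open SimpleGraph

/-!
A compact space `(V, d_l)` built on an infinite tree has an accumulation point `p`. Nearby points
are reached from `p` through a neighbour of `p` whose label is at most their distance from `p`,
while every edge carries a positive label; hence `p` has infinitely many neighbours `a₀, b₀, a₁,
b₁, …`. Labelling `p` by `0`, `aₖ` by `1 / (k + 1)` and all other vertices by `1` makes
`{p} ∪ {aₖ}` an infinite totally bounded set, while each `bₖ` is at distance at least `1` from
every other vertex, so `V` is not totally bounded, contradicting the hypothesis.
-/

open Set Filter Topology

section

variable {V : Type*}

theorem exists_infinite_ball_of_compactWith [Infinite V] {d : V → V → ℝ} (hd : ∀ x, d x x = 0)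
    (hcomp : CompactWith d) : ∃ p, ∀ r : ℝ, 0 < r → {y | d p y < r}.Infinite := by
  by_contra! hfin
  choose r hr hball using hfin
  obtain ⟨s, hsF, hscov⟩ := hcomp {pr | {y | d pr.1 y < pr.2}.Finite}
    fun x => ⟨(x, r x), hball x, by simpa [hd x] using hr x⟩
  refine infinite_univ (((s.finite_toSet.biUnion fun pr hpr => hsF hpr)).subset fun x _ => ?_)
  obtain ⟨pr, hpr, hlt⟩ := hscov x
  exact mem_biUnion hpr hlt

theorem exists_isLabelDist {G : SimpleGraph V} (hG : G.IsTree) (l : V → ℝ) :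
    ∃ d, IsLabelDist G l d := by
  classical
  choose P _ hPuniq using hG.existsUnique_path
  refine ⟨fun u v => if u = v then 0 else sSup (l '' {w | w ∈ (P u v).support}),
    fun u => if_pos rfl, fun u v huv p hp => ?_⟩
  simp only [hPuniq u v p hp, if_neg huv]
  have hfin : (l '' {w | w ∈ (P u v).support}).Finite := (P u v).support.finite_toSet.image l
  have hne : (l '' {w | w ∈ (P u v).support}).Nonempty := ⟨l u, u, (P u v).start_mem_support, rfl⟩
  exact ⟨hne.csSup_mem hfin, fun x hx => le_csSup hfin.bddAbove hx⟩

namespace IsLabelDist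

variable {G : SimpleGraph V} {l : V → ℝ} {d : V → V → ℝ}

theorem label_le_of_mem_support (hd : IsLabelDist G l d) {u v w : V} (huv : u ≠ v)
    (p : G.Walk u v) (hp : p.IsPath) (hw : w ∈ p.support) : l w ≤ d u v :=
  (hd.2 u v huv p hp).2 ⟨w, hw, rfl⟩

theorem eq_max_of_adj (hd : IsLabelDist G l d) {u v : V} (h : G.Adj u v) :
    d u v = max (l u) (l v) := by
  have hsupp : {w | w ∈ (Path.singleton h : G.Walk u v).support} = {u, v} := by
    ext w
    simp [Path.singleton]
  have hIG := hd.2 u v h.ne _ (Path.singleton h).2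
  rw [hsupp, image_pair] at hIG
  exact hIG.unique isGreatest_pair

theorem label_le (hd : IsLabelDist G l d) (hG : G.Preconnected) {u v : V} (huv : u ≠ v) :
    l v ≤ d u v := by
  classical
  let p := (hG u v).some.toPath
  exact hd.label_le_of_mem_support huv p.1 p.2 p.1.end_mem_support

theorem exists_adj_max_le (hd : IsLabelDist G l d) (hG : G.Preconnected) {u v : V}
    (huv : u ≠ v) : ∃ q, G.Adj u q ∧ max (l u) (l q) ≤ d u v := by
  classical
  let p := (hG u v).some.toPath
  refine ⟨p.1.snd, Walk.adj_snd (Walk.not_nil_of_ne huv), max_le ?_ ?_⟩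
  · exact hd.label_le_of_mem_support huv p.1 p.2 p.1.start_mem_support
  · exact hd.label_le_of_mem_support huv p.1 p.2 (p.1.getVert_mem_support 1)

theorem totallyBoundedWith_insert_range (hd : IsLabelDist G l d) {p : V} (hp : l p = 0)
    {a : ℕ → V} (hadj : ∀ k, G.Adj p (a k)) (ha : Tendsto (l ∘ a) atTop (𝓝 0)) :
    TotallyBoundedWith d (insert p (range a)) := by
  intro r hr
  obtain ⟨K, hK⟩ := eventually_atTop.1 (ha.eventually (gt_mem_nhds hr))
  classical
  refine ⟨insert p ((Finset.range K).image a), ?_, ?_⟩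
  · simp only [Finset.coe_insert, Finset.coe_image]
    exact insert_subset_insert (image_subset_range _ _)
  · rintro x (rfl | ⟨k, rfl⟩)
    · exact ⟨x, Finset.mem_insert_self _ _, by rw [hd.1]; exact hr⟩
    by_cases hk : k < K
    · exact ⟨a k, Finset.mem_insert_of_mem (Finset.mem_image_of_mem a (Finset.mem_range.2 hk)),
        by rw [hd.1]; exact hr⟩
    · refine ⟨p, Finset.mem_insert_self _ _, ?_⟩
      rw [hd.eq_max_of_adj (hadj k), hp]
      exact max_lt hr (hK k (not_lt.1 hk))

theorem not_totallyBoundedWith_univ (hd : IsLabelDist G l d) (hG : G.Preconnected) {r : ℝ}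
    (hr : 0 < r) (hlarge : {v | r ≤ l v}.Infinite) : ¬ TotallyBoundedWith d univ := by
  intro hTB
  obtain ⟨s, -, hs⟩ := hTB r hr
  refine hlarge (s.finite_toSet.subset fun v hv => ?_)
  obtain ⟨c, hc, hcv⟩ := hs v (mem_univ v)
  by_cases hcv' : c = v
  · exact hcv' ▸ hc
  · exact absurd (hd.label_le hG hcv') (not_le.2 (hcv.trans_le hv))

theorem infinite_neighborSet_of_compactWith [Infinite V] (hd : IsLabelDist G l d)
    (hG : G.Preconnected) (hnd : NondegenerateLabeling G l) (hcomp : CompactWith d) :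
    ∃ p, (G.neighborSet p).Infinite := by
  obtain ⟨p, hp⟩ := exists_infinite_ball_of_compactWith hd.1 hcomp
  refine ⟨p, fun hfin => ?_⟩
  have hsmall : ∀ᶠ r in 𝓝[>] (0 : ℝ), ∀ q ∈ G.neighborSet p, r < max (l p) (l q) :=
    hfin.eventually_all.2 fun q hq =>
      eventually_nhdsWithin_of_eventually_nhds (gt_mem_nhds (hnd p q hq))
  obtain ⟨r, hrle, hr⟩ := (hsmall.and self_mem_nhdsWithin).exists
  obtain ⟨x, hxr, hxp⟩ := ((hp r hr).sdiff (finite_singleton p)).nonempty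
  obtain ⟨q, hq, hle⟩ := hd.exists_adj_max_le hG (Ne.symm hxp)
  exact absurd (hle.trans_lt hxr) (not_lt.2 (hrle q hq).le)

end IsLabelDist

section starLabeling

variable [DecidableEq V]

/-- The labeling `p ↦ 0`, `a k ↦ 1 / (k + 1)`, and `1` everywhere else. -/
noncomputable def starLabeling (p : V) (a : ℕ → V) : V → ℝ :=
  Function.update (Function.extend a (fun k => 1 / (k + 1 : ℝ)) 1) p 0

variable {p : V} {a : ℕ → V}

@[simp]
theorem starLabeling_self : starLabeling p a p = 0 :=
  Function.update_self ..

theorem starLabeling_apply (ha : Function.Injective a) (hp : ∀ k, a k ≠ p) (k : ℕ) :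
    starLabeling p a (a k) = 1 / (k + 1) := by
  rw [starLabeling, Function.update_of_ne (hp k), ha.extend_apply]

theorem starLabeling_eq_one {v : V} (hvp : v ≠ p) (hva : v ∉ range a) :
    starLabeling p a v = 1 := by
  rw [starLabeling, Function.update_of_ne hvp, Function.extend_apply' _ _ _ hva, Pi.one_apply]

theorem starLabeling_pos {v : V} (hvp : v ≠ p) : 0 < starLabeling p a v := by
  classical
  rw [starLabeling, Function.update_of_ne hvp, Function.extend_def]
  split_ifs
  · positivity
  · exact one_pos

theorem starLabeling_nonneg (v : V) : 0 ≤ starLabeling p a v := by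
  rcases eq_or_ne v p with rfl | hvp
  · exact starLabeling_self.ge
  · exact (starLabeling_pos hvp).le

theorem nondegenerateLabeling_starLabeling (G : SimpleGraph V) :
    NondegenerateLabeling G (starLabeling p a) := by
  intro u v huv
  rcases eq_or_ne u p with rfl | hup
  · exact lt_max_of_lt_right (starLabeling_pos huv.ne.symm)
  · exact lt_max_of_lt_left (starLabeling_pos hup)

end starLabeling

def TotallyBoundedIffInfiniteTotallyBoundedSubset (G : SimpleGraph V) : Prop :=
  ∀ l : V → ℝ, (∀ w, 0 ≤ l w) → NondegenerateLabeling G l →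
    ∀ d : V → V → ℝ, IsLabelDist G l d →
      (TotallyBoundedWith d univ ↔ ∃ A : Set V, A.Infinite ∧ TotallyBoundedWith d A)

theorem TotallyBoundedIffInfiniteTotallyBoundedSubset.neighborSet_finite {G : SimpleGraph V}
    (hG : G.IsTree) (h : TotallyBoundedIffInfiniteTotallyBoundedSubset G) (p : V) :
    (G.neighborSet p).Finite := by
  classical
  refine not_infinite.1 fun hinf => ?_
  let e : ℕ → V := fun n => hinf.natEmbedding _ n
  have he : Function.Injective e := Subtype.val_injective.comp (hinf.natEmbedding _).injective
  have hadj : ∀ n, G.Adj p (e n) := fun n => (hinf.natEmbedding _ n).2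
  let a : ℕ → V := fun k => e (2 * k)
  let b : ℕ → V := fun k => e (2 * k + 1)
  have ha : Function.Injective a := fun j k hjk => by have := he hjk; omega
  have hb : Function.Injective b := fun j k hjk => by have := he hjk; omega
  have hba : ∀ k, b k ∉ range a := fun k ⟨j, hjk⟩ => by have := he hjk; omega
  let l := starLabeling p a
  obtain ⟨d, hd⟩ := exists_isLabelDist hG l
  have hA : TotallyBoundedWith d (insert p (range a)) := by
    refine hd.totallyBoundedWith_insert_range starLabeling_self (fun k => hadj _) ?_
    have hla : l ∘ a = fun k : ℕ => 1 / ((k : ℝ) + 1) :=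
      funext (starLabeling_apply ha fun k => (hadj _).ne.symm)
    rw [hla]
    exact tendsto_one_div_add_atTop_nhds_zero_nat
  have hlarge : {v | 1 ≤ l v}.Infinite :=
    (infinite_range_of_injective hb).mono <| range_subset_iff.2 fun k =>
      (starLabeling_eq_one (hadj _).ne.symm (hba k)).ge
  refine hd.not_totallyBoundedWith_univ hG.connected.preconnected one_pos hlarge
    ((h l starLabeling_nonneg (nondegenerateLabeling_starLabeling G) d hd).2 ⟨_, ?_, hA⟩)
  exact (infinite_range_of_injective ha).mono (subset_insert _ _)

end

/-- If an infinite tree `T` is such that for every non-degenerate labeling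
`l` the space `(V(T), d_l)` is totally bounded iff it contains an infinite totally
bounded subset, then `(V(T), d_l)` is not compact for every non-degenerate labeling. -/
theorem stmt11 {V : Type*} [Infinite V] (G : SimpleGraph V) (hG : G.IsTree)
    (hyp : ∀ l : V → ℝ, (∀ w, 0 ≤ l w) → NondegenerateLabeling G l →
      ∀ d : V → V → ℝ, IsLabelDist G l d →
        (TotallyBoundedWith d Set.univ ↔
          ∃ A : Set V, A.Infinite ∧ TotallyBoundedWith d A)) :
    ∀ l : V → ℝ, (∀ w, 0 ≤ l w) → NondegenerateLabeling G l →
      ∀ d : V → V → ℝ, IsLabelDist G l d → ¬ CompactWith d := by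
  intro l _ hnd d hd hcomp
  obtain ⟨p, hp⟩ := hd.infinite_neighborSet_of_compactWith hG.connected.preconnected hnd hcomp
  exact hp (TotallyBoundedIffInfiniteTotallyBoundedSubset.neighborSet_finite hG hyp p)
end

section
/- Let T be a locally finite tree and let l : V(T) → [0,∞) be a non-degenerate labeling. Then every point of the ultrametric space (V(T), d_l) is isolated, i.e., for every p ∈ V(T) there is ε > 0 such that d_l(x, p) > ε for every x ∈ V(T) with x ≠ p. -/
open SimpleGraph

/-- If `T` is a locally finite tree and `l` is a non-degenerate labeling,
then every point of the ultrametric space `(V(T), d_l)` is isolated. -/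
theorem stmt12 {V : Type*} (G : SimpleGraph V) (hG : G.IsTree)
    (hlf : ∀ v : V, (G.neighborSet v).Finite)
    (l : V → ℝ) (hl : ∀ w, 0 ≤ l w) (hnd : NondegenerateLabeling G l)
    (d : V → V → ℝ) (hd : IsLabelDist G l d) :
    ∀ p : V, ∃ ε : ℝ, 0 < ε ∧ ∀ x : V, x ≠ p → ε < d x p := by
  intro p
  classical
  have hS : (G.neighborSet p).Finite := hlf p
  by_cases hne : hS.toFinset.Nonempty
  · set m := hS.toFinset.inf' hne (fun v => max (l p) (l v)) with hm
    have hmpos : 0 < m := by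
      apply Finset.lt_inf'_iff hne |>.2
      intro v hv
      exact hnd p v (hS.mem_toFinset.1 hv)
    refine ⟨m / 2, by linarith, ?_⟩
    intro x hx
    obtain ⟨P, hP, -⟩ := hG.existsUnique_path x p
    have hIG := hd.2 x p hx P hP
    have hle : ∀ w ∈ P.support, l w ≤ d x p := by
      intro w hw
      exact hIG.2 ⟨w, hw, rfl⟩
    obtain ⟨b, hb, hbmem⟩ : ∃ b, G.Adj p b ∧ b ∈ P.support := by
      have hQ : P.reverse.support = P.support.reverse := SimpleGraph.Walk.support_reverse P
      cases hQ' : P.reverse with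
      | nil => exact absurd rfl hx
      | @cons _ b _ h q =>
        refine ⟨b, h, ?_⟩
        have hbs : b ∈ P.reverse.support := by
          rw [hQ', SimpleGraph.Walk.support_cons]
          exact List.mem_cons_of_mem _ (SimpleGraph.Walk.start_mem_support q)
        rwa [SimpleGraph.Walk.support_reverse, List.mem_reverse] at hbs
    have h1 : l p ≤ d x p := hle p P.end_mem_support
    have h2 : l b ≤ d x p := hle b hbmem
    have h3 : m ≤ max (l p) (l b) :=
      Finset.inf'_le _ (hS.mem_toFinset.2 hb)
    have : m ≤ d x p := le_trans h3 (max_le h1 h2)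
    linarith
  · refine ⟨1, one_pos, ?_⟩
    intro x hx
    exfalso
    obtain ⟨P, hP, -⟩ := hG.existsUnique_path p x
    cases hPc : P with
    | nil => exact hx rfl
    | cons h q =>
      exact hne ⟨_, hS.mem_toFinset.2 h⟩
end

section
/- Let T be an almost ray and let l : V(T) → [0,∞) be a non-degenerate labeling. Then the completion of the ultrametric space (V(T), d_l) has at most one accumulation point. -/
open SimpleGraph

/-- A path along a ray, with support exactly the segment of the ray. -/
private lemma rayWalk {V : Type*} {G : SimpleGraph V} (fr : ℕ → V)
    (hinj : Function.Injective fr) (hadj : ∀ n, G.Adj (fr n) (fr (n + 1))) :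
    ∀ a b : ℕ, a ≤ b → ∃ p : G.Walk (fr a) (fr b), p.IsPath ∧
      (∀ w ∈ p.support, ∃ i, a ≤ i ∧ i ≤ b ∧ w = fr i) ∧
      (∀ i, a ≤ i → i ≤ b → fr i ∈ p.support) := by
  intro a b hab
  induction b, hab using Nat.le_induction with
  | base =>
    refine ⟨SimpleGraph.Walk.nil, SimpleGraph.Walk.IsPath.nil, ?_, ?_⟩
    · intro w hw
      simp only [SimpleGraph.Walk.support_nil, List.mem_singleton] at hw
      exact ⟨a, le_refl a, le_refl a, hw⟩
    · intro i h1 h2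
      have : i = a := le_antisymm h2 h1
      subst this
      simp
  | succ b hab ih =>
    obtain ⟨p, hp, hsub, hmem⟩ := ih
    refine ⟨(SimpleGraph.Walk.cons (hadj b).symm p.reverse).reverse, ?_, ?_, ?_⟩
    · apply SimpleGraph.Walk.IsPath.reverse
      rw [SimpleGraph.Walk.cons_isPath_iff]
      refine ⟨hp.reverse, ?_⟩
      rw [SimpleGraph.Walk.support_reverse, List.mem_reverse]
      intro hmem'
      obtain ⟨i, hi1, hi2, hi3⟩ := hsub _ hmem'
      have := hinj hi3
      omega
    · intro w hw
      simp only [SimpleGraph.Walk.support_reverse, List.mem_reverse,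
        SimpleGraph.Walk.support_cons, List.mem_cons] at hw
      rcases hw with hw | hw
      · exact ⟨b + 1, by omega, le_refl _, hw⟩
      · obtain ⟨i, hi1, hi2, hi3⟩ := hsub w hw
        exact ⟨i, hi1, by omega, hi3⟩
    · intro i h1 h2
      simp only [SimpleGraph.Walk.support_reverse, List.mem_reverse,
        SimpleGraph.Walk.support_cons, List.mem_cons]
      rcases Nat.lt_or_ge i (b + 1) with h | h
      · exact Or.inr (hmem i h1 (by omega))
      · have : i = b + 1 := by omega
        subst this
        exact Or.inl rfl

/-- If `T` is an almost ray and `l` is a non-degenerate labeling, then the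
completion of the ultrametric space `(V(T), d_l)` (any complete metric space into which
`(V(T), d_l)` embeds isometrically with dense image) has at most one accumulation
point. -/
theorem stmt13 {V : Type*} (G : SimpleGraph V) (hG : G.IsTree)
    (hAR : IsAlmostRayGraph G)
    (l : V → ℝ) (hl : ∀ w, 0 ≤ l w) (hnd : NondegenerateLabeling G l)
    (d : V → V → ℝ) (hd : IsLabelDist G l d) :
    ∀ (X : Type*) [MetricSpace X] [CompleteSpace X] (f : V → X),
      (∀ a b : V, dist (f a) (f b) = d a b) → DenseRange f →
      ∀ p q : X,
        (∀ ε : ℝ, 0 < ε → ∃ x : X, x ≠ p ∧ dist x p < ε) →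
        (∀ ε : ℝ, 0 < ε → ∃ x : X, x ≠ q ∧ dist x q < ε) → p = q := by
  classical
  intro X _ _ f hiso hdense p q hp hq
  obtain ⟨R, T₀, ⟨fr, hinj, hverts, hRadj⟩, ⟨hT₀fin, _⟩, hsup⟩ := hAR
  have hadj : ∀ n, G.Adj (fr n) (fr (n + 1)) := fun n =>
    R.adj_sub ((hRadj (fr n) (fr (n + 1))).mpr ⟨n, Or.inl ⟨rfl, rfl⟩⟩)
  have huniv : ∀ v : V, v ∈ T₀.verts ∨ ∃ k, v = fr k := by
    intro v
    have hv : v ∈ (T₀ ⊔ R).verts := by rw [hsup]; simp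
    rw [SimpleGraph.Subgraph.verts_sup, hverts] at hv
    rcases hv with h | h
    · exact Or.inl h
    · obtain ⟨k, hk⟩ := h; exact Or.inr ⟨k, hk.symm⟩
  -- the distance along a ray segment: it equals some label in the segment,
  -- and dominates every label in the segment
  have dray : ∀ a b : ℕ, a < b →
      ((∃ i, a ≤ i ∧ i ≤ b ∧ d (fr a) (fr b) = l (fr i)) ∧
        ∀ i, a ≤ i → i ≤ b → l (fr i) ≤ d (fr a) (fr b)) := by
    intro a b hab
    obtain ⟨pw, hpw, hsub, hmem⟩ := rayWalk fr hinj hadj a b hab.le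
    have hne : fr a ≠ fr b := fun h => (hab.ne (hinj h))
    have hg := hd.2 (fr a) (fr b) hne pw hpw
    constructor
    · obtain ⟨w, hw, hweq⟩ := hg.1
      obtain ⟨i, h1, h2, h3⟩ := hsub w hw
      exact ⟨i, h1, h2, by rw [← hweq, h3]⟩
    · intro i h1 h2
      exact hg.2 ⟨fr i, hmem i h1 h2, rfl⟩
  -- points with the accumulation property are approached by punctured images
  have punct : ∀ z : X, (∀ ε : ℝ, 0 < ε → ∃ x : X, x ≠ z ∧ dist x z < ε) →
      ∀ ε : ℝ, 0 < ε → ∃ v : V, 0 < dist (f v) z ∧ dist (f v) z < ε := by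
    intro z hz ε hε
    obtain ⟨x, hxz, hxd⟩ := hz (ε / 2) (by linarith)
    have hpos : 0 < dist x z := dist_pos.mpr hxz
    obtain ⟨v, hv⟩ := Metric.denseRange_iff.mp hdense x (min (ε / 2) (dist x z))
      (lt_min (by linarith) hpos)
    have h1 : dist x (f v) < dist x z := lt_of_lt_of_le hv (min_le_right _ _)
    have h2 : dist x (f v) < ε / 2 := lt_of_lt_of_le hv (min_le_left _ _)
    have t1 := dist_triangle x (f v) z
    have t2 := dist_triangle (f v) x z
    have hc : dist (f v) x = dist x (f v) := dist_comm _ _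
    exact ⟨v, by linarith, by linarith⟩
  -- accumulation points are approached by ray vertices of arbitrarily large index
  have claimA : ∀ z : X, (∀ ε : ℝ, 0 < ε → ∃ x : X, x ≠ z ∧ dist x z < ε) →
      ∀ ε : ℝ, 0 < ε → ∀ N : ℕ, ∃ k, N < k ∧ dist (f (fr k)) z < ε := by
    intro z hz ε hε N
    have hWfin : (T₀.verts ∪ fr '' Set.Iic N).Finite :=
      hT₀fin.union ((Set.finite_Iic N).image fr)
    obtain ⟨δ, hδpos, hδ⟩ : ∃ δ > 0, ∀ v ∈ T₀.verts ∪ fr '' Set.Iic N,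
        f v ≠ z → δ ≤ dist (f v) z := by
      set S : Finset ℝ := (hWfin.toFinset.filter (fun v => f v ≠ z)).image
        (fun v => dist (f v) z) with hS_def
      by_cases hS : S.Nonempty
      · refine ⟨S.min' hS, ?_, ?_⟩
        · have hm := S.min'_mem hS
          simp only [hS_def, Finset.mem_image, Finset.mem_filter] at hm
          obtain ⟨v, ⟨_, hvne⟩, hveq⟩ := hm
          rw [← hveq]
          exact dist_pos.mpr hvne
        · intro v hvW hvne
          apply Finset.min'_le
          simp only [hS_def, Finset.mem_image, Finset.mem_filter]
          exact ⟨v, ⟨hWfin.mem_toFinset.mpr hvW, hvne⟩, rfl⟩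
      · refine ⟨1, one_pos, fun v hvW hvne => absurd ?_ hS⟩
        exact ⟨dist (f v) z, Finset.mem_image.mpr
          ⟨v, Finset.mem_filter.mpr ⟨hWfin.mem_toFinset.mpr hvW, hvne⟩, rfl⟩⟩
    obtain ⟨v, hv1, hv2⟩ := punct z hz (min ε δ) (lt_min hε hδpos)
    have hvW : v ∉ T₀.verts ∪ fr '' Set.Iic N := by
      intro hvW
      have hne : f v ≠ z := by
        intro h; rw [h] at hv1; simp at hv1
      have hge := hδ v hvW hne
      have hlt := lt_of_lt_of_le hv2 (min_le_right _ _)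
      linarith
    rcases huniv v with h | ⟨k, rfl⟩
    · exact absurd (Or.inl h) hvW
    · refine ⟨k, ?_, lt_of_lt_of_le hv2 (min_le_left _ _)⟩
      by_contra h
      push_neg at h
      exact hvW (Or.inr ⟨k, h, rfl⟩)
  -- labels tend to zero along the ray
  have claimB : ∀ ε : ℝ, 0 < ε → ∃ N : ℕ, ∀ j, N ≤ j → l (fr j) < ε := by
    intro ε hε
    obtain ⟨k₁, _, hk₁⟩ := claimA p hp (ε / 2) (by linarith) 0
    refine ⟨k₁, fun j hj => ?_⟩
    obtain ⟨k₂, hk₂j, hk₂⟩ := claimA p hp (ε / 2) (by linarith) j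
    have h12 : k₁ < k₂ := lt_of_le_of_lt hj hk₂j
    have hdlt : d (fr k₁) (fr k₂) < ε := by
      have hiso' := hiso (fr k₁) (fr k₂)
      have t := dist_triangle (f (fr k₁)) p (f (fr k₂))
      have hc : dist p (f (fr k₂)) = dist (f (fr k₂)) p := dist_comm _ _
      linarith
    have hle := (dray k₁ k₂ h12).2 j hj (le_of_lt hk₂j)
    linarith
  -- conclusion
  have key : ∀ ε : ℝ, 0 < ε → dist p q < ε := by
    intro ε hε
    obtain ⟨N, hN⟩ := claimB (ε / 4) (by linarith)
    obtain ⟨a, haN, ha⟩ := claimA p hp (ε / 4) (by linarith) N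
    obtain ⟨b, hba, hb⟩ := claimA q hq (ε / 4) (by linarith) a
    obtain ⟨⟨i, hi1, hi2, hieq⟩, -⟩ := dray a b hba
    have hlab : l (fr i) < ε / 4 := hN i (le_trans (le_of_lt haN) hi1)
    have h3 : d (fr a) (fr b) < ε / 4 := by rw [hieq]; exact hlab
    have t := dist_triangle4 p (f (fr a)) (f (fr b)) q
    have h1 : dist p (f (fr a)) = dist (f (fr a)) p := dist_comm _ _
    have h2 : dist (f (fr a)) (f (fr b)) = d (fr a) (fr b) := hiso _ _
    linarith
  by_contra hne
  exact absurd (key (dist p q) (dist_pos.mpr hne)) (lt_irrefl _)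
end

section
/- Let T be a tree, let U ⊆ V(T) be an infinite set of vertices, and let H be the convex hull of U in T. Suppose R* = (v*_1, v*_2, ...) is a ray which is a subgraph of H and V(R*) ∩ U = ∅. Then there are infinitely many n ∈ ℕ with n ≥ 2 such that the degree of v*_n in H is at least 3. -/
open SimpleGraph

/-!
If only finitely many ray vertices had degree at least 3 in `H`, then beyond some index `N`
every ray vertex `f m` would have exactly the neighbours `f (m - 1)` and `f (m + 1)` in `H`.
A path in `H` between vertices outside the tail `{f m | m > N}` cannot enter the tail: at the
tail vertex of largest index on the path it would have to continue to `f (m + 1)`. Hence deleting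
the tail from `H` leaves a subtree, and it still contains `U` because `U` misses the ray. This
contradicts the minimality of the convex hull `H`.
-/

open Set

theorem Set.eq_pair_of_encard_lt_three {α : Type*} {s : Set α} {a b : α} (hab : a ≠ b)
    (ha : a ∈ s) (hb : b ∈ s) (hs : s.encard < 3) : s = {a, b} := by
  have hsub : ({a, b} : Set α) ⊆ s := insert_subset ha (singleton_subset_iff.2 hb)
  refine ((finite_of_encard_le_coe hs.le).eq_of_subset_of_encard_le' hsub ?_).symm
  rw [encard_pair hab]
  exact Order.le_of_lt_succ hs

namespace SimpleGraph

variable {V : Type*} {G : SimpleGraph V} {H : G.Subgraph} {f : ℕ → V} {N : ℕ}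

lemma Walk.IsPath.support_disjoint_tail (hf : f.Injective)
    (hnbr : ∀ m, N < m → H.neighborSet (f m) ⊆ {f (m - 1), f (m + 1)})
    {u v : V} {p : G.Walk u v} (hp : p.IsPath) (hpH : p.toSubgraph ≤ H)
    (hu : u ∉ f '' Ioi N) (hv : v ∉ f '' Ioi N) : ∀ x ∈ p.support, x ∉ f '' Ioi N := by
  rintro _ hx ⟨m, hm, rfl⟩
  have hS : {k | N < k ∧ f k ∈ p.support}.Finite :=
    (p.support.finite_toSet.preimage hf.injOn).subset fun k hk => hk.2
  obtain ⟨k, ⟨hNk, hk⟩, hmax⟩ := hS.exists_maximal ⟨m, hm, hx⟩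
  obtain ⟨i, hi, hil⟩ := Walk.mem_support_iff_exists_getVert.1 hk
  have hi0 : i ≠ 0 := by
    rintro rfl
    exact hu ⟨k, hNk, by simpa using hi.symm⟩
  have hil' : i ≠ p.length := by
    rintro rfl
    exact hv ⟨k, hNk, by simpa using hi.symm⟩
  have hprev : p.getVert (i - 1) ∈ H.neighborSet (f k) := by
    have := hpH.2 (p.toSubgraph_adj_getVert (i := i - 1) (by omega))
    rw [Nat.sub_add_cancel (by omega), hi] at this
    exact this.symm
  have hnext : p.getVert (i + 1) ∈ H.neighborSet (f k) :=
    hi ▸ hpH.2 (p.toSubgraph_adj_getVert (by omega))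
  have hne : p.getVert (i - 1) ≠ p.getVert (i + 1) := fun h => by
    have := hp.getVert_injOn (by simp only [mem_ofPred_eq]; omega)
      (by simp only [mem_ofPred_eq]; omega) h
    omega
  obtain ⟨j, hj⟩ : ∃ j, p.getVert j = f (k + 1) := by
    rcases hnbr k hNk hprev with h | h
    · rcases hnbr k hNk hnext with h' | h'
      · exact absurd (h.trans h'.symm) hne
      · exact ⟨_, h'⟩
    · exact ⟨_, h⟩
  have := hmax ⟨by omega, hj ▸ p.getVert_mem_support j⟩ (Nat.le_succ k)
  omega

lemma Subgraph.Connected.deleteVerts_tail (hH : H.Connected) (hf : f.Injective)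
    (hN : f N ∈ H.verts) (hnbr : ∀ m, N < m → H.neighborSet (f m) ⊆ {f (m - 1), f (m + 1)}) :
    (H.deleteVerts (f '' Ioi N)).Connected := by
  classical
  rw [Subgraph.connected_iff_forall_exists_walk_subgraph]
  refine ⟨⟨f N, hN, fun ⟨m, hm, h⟩ => (hf h ▸ hm : N < N).false⟩, fun {u v} hu hv => ?_⟩
  obtain ⟨p, hpH⟩ := (Subgraph.preconnected_iff_forall_exists_walk_subgraph H).1
    hH.preconnected hu.1 hv.1
  have hqH : p.bypass.toSubgraph ≤ H := Walk.toSubgraph_bypass_le_toSubgraph.trans hpH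
  have hq := p.bypass_isPath.support_disjoint_tail hf hnbr hqH hu.2 hv.2
  have hq' : ∀ x ∈ p.bypass.toSubgraph.verts, x ∉ f '' Ioi N := fun x hx =>
    hq x ((p.bypass.mem_verts_toSubgraph).1 hx)
  refine ⟨p.bypass, fun x hx => ⟨hqH.1 hx, hq' x hx⟩, fun x y hxy => ?_⟩
  rw [Subgraph.deleteVerts_adj]
  exact ⟨hqH.1 hxy.fst_mem, hq' x hxy.fst_mem, hqH.1 hxy.snd_mem, hq' y hxy.snd_mem, hqH.2 hxy⟩

lemma Subgraph.isTree_coe_deleteVerts_tail (hH : H.coe.IsTree) (hf : f.Injective)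
    (hN : f N ∈ H.verts) (hnbr : ∀ m, N < m → H.neighborSet (f m) ⊆ {f (m - 1), f (m + 1)}) :
    (H.deleteVerts (f '' Ioi N)).coe.IsTree :=
  ⟨(Subgraph.Connected.mk hH.connected).deleteVerts_tail hf hN hnbr |>.coe,
    hH.isAcyclic.comap _ (Subgraph.inclusion.injective (Subgraph.deleteVerts_le))⟩

end SimpleGraph

theorem stmt14_general {V : Type*} (G : SimpleGraph V)
    (U : Set V)
    (H : G.Subgraph) (hH : IsConvexHullSubtree G U H)
    (R : G.Subgraph) (f : ℕ → V) (hf : Function.Injective f)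
    (hadj : ∀ x y, R.Adj x y ↔ ∃ n, (x = f n ∧ y = f (n + 1)) ∨ (x = f (n + 1) ∧ y = f n))
    (hRH : R ≤ H) (hdisj : Set.range f ∩ U = ∅) :
    {n : ℕ | 1 ≤ n ∧ 3 ≤ (H.neighborSet (f n)).encard}.Infinite := by
  by_contra hfin
  obtain ⟨N, hN⟩ := (not_infinite.1 hfin).bddAbove
  obtain ⟨htree, hUH, hmin⟩ := hH
  have hray : ∀ n, H.Adj (f n) (f (n + 1)) := fun n =>
    hRH.2 ((hadj _ _).2 ⟨n, .inl ⟨rfl, rfl⟩⟩)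
  have hnbr : ∀ m, N < m → H.neighborSet (f m) ⊆ {f (m - 1), f (m + 1)} := by
    intro m hm
    obtain ⟨k, rfl⟩ : ∃ k, m = k + 1 := ⟨m - 1, by omega⟩
    refine (eq_pair_of_encard_lt_three (hf.ne (by omega)) (hray k).symm (hray (k + 1))
      (lt_of_not_ge fun h => ?_)).le
    have := hN ⟨by omega, h⟩
    omega
  have hUtail : U ⊆ (H.deleteVerts (f '' Ioi N)).verts := fun u hu =>
    ⟨hUH hu, by rintro ⟨m, -, rfl⟩; exact hdisj.subset ⟨mem_range_self m, hu⟩⟩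
  have hle := hmin _ (Subgraph.isTree_coe_deleteVerts_tail htree hf (hray N).fst_mem hnbr) hUtail
  exact (hle.1 (hray (N + 1)).fst_mem).2 ⟨N + 1, Nat.lt_succ_self N, rfl⟩

/-- Let `H` be the convex hull of an infinite set `U` of vertices of a tree
`T`, and let `R* = (f 0, f 1, …)` be a ray which is a subgraph of `H` with
`V(R*) ∩ U = ∅`. Then there are infinitely many `n ≥ 1` (i.e. vertices other than the
first one) such that the degree of `f n` in `H` is at least `3`. -/
theorem stmt14 {V : Type*} (G : SimpleGraph V) (hG : G.IsTree)
    (U : Set V) (hU : U.Infinite)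
    (H : G.Subgraph) (hH : IsConvexHullSubtree G U H)
    (R : G.Subgraph) (f : ℕ → V) (hf : Function.Injective f)
    (hverts : R.verts = Set.range f)
    (hadj : ∀ x y, R.Adj x y ↔ ∃ n, (x = f n ∧ y = f (n + 1)) ∨ (x = f (n + 1) ∧ y = f n))
    (hRH : R ≤ H) (hdisj : Set.range f ∩ U = ∅) :
    {n : ℕ | 1 ≤ n ∧ 3 ≤ (H.neighborSet (f n)).encard}.Infinite :=
  stmt14_general G U H hH R f hf hadj hRH hdisj
end

section
/- Let T be a tree, let U ⊆ V(T) be an infinite set of vertices, and let H be the convex hull of U in T. If R is a ray which is a subgraph of H and the set U \ V(R) is finite, then H is almost a ray. -/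
open SimpleGraph

/-!
Fix a vertex `v` of the ray `R`. The finitely many vertices of `U` off `R` are joined to `v` by
paths in `H`; their union `T₀` is a finite subtree of `H` meeting `R` in `v`. Then `T₀ ⊔ R` is a
connected subgraph of the tree `G`, hence a subtree, and it contains `U`; by minimality of the
convex hull, `T₀ ⊔ R = H`.
-/

section

variable {V : Type*} {G : SimpleGraph V}

lemma IsRaySubgraph.connected {R : G.Subgraph} (hR : IsRaySubgraph R) : R.Connected := by
  obtain ⟨f, -, hverts, hadj⟩ := hR
  have hmem (n : ℕ) : f n ∈ R.verts := hverts ▸ Set.mem_range_self n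
  have hreach (n : ℕ) : R.coe.Reachable ⟨f 0, hmem 0⟩ ⟨f n, hmem n⟩ := by
    induction n with
    | zero => rfl
    | succ n ih => exact ih.trans (Adj.reachable ((hadj _ _).2 ⟨n, .inl ⟨rfl, rfl⟩⟩))
  rw [Subgraph.connected_iff', connected_iff_exists_forall_reachable]
  refine ⟨⟨f 0, hmem 0⟩, ?_⟩
  rintro ⟨x, hx⟩
  obtain ⟨n, rfl⟩ : x ∈ Set.range f := hverts ▸ hx
  exact hreach n

lemma SimpleGraph.Subgraph.Connected.exists_finite_connected_le {H : G.Subgraph}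
    (hH : H.Connected) {v : V} (hv : v ∈ H.verts) {F : Set V} (hF : F.Finite)
    (hFH : F ⊆ H.verts) :
    ∃ S ≤ H, S.Connected ∧ v ∈ S.verts ∧ F ⊆ S.verts ∧ S.verts.Finite := by
  induction F, hF using Set.Finite.induction_on with
  | empty =>
    exact ⟨G.singletonSubgraph v, by simpa using hv, Subgraph.singletonSubgraph_connected,
      rfl, Set.empty_subset _, Set.finite_singleton v⟩
  | @insert a s _ _ ih =>
    obtain ⟨S, hSH, hS, hvS, hsS, hSfin⟩ := ih ((Set.subset_insert a s).trans hFH)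
    obtain ⟨p, hpH⟩ :=
      (H.connected_iff_forall_exists_walk_subgraph.1 hH).2 hv (hFH (Set.mem_insert a s))
    refine ⟨S ⊔ p.toSubgraph, sup_le hSH hpH,
      Subgraph.connected_sup hS.preconnected p.toSubgraph_connected.preconnected
        ⟨v, hvS, p.start_mem_verts_toSubgraph⟩, Or.inl hvS, ?_, ?_⟩
    · exact Set.insert_subset (Or.inr p.end_mem_verts_toSubgraph)
        (hsS.trans Set.subset_union_left)
    · rw [Subgraph.verts_sup, Walk.verts_toSubgraph]
      exact hSfin.union (List.finite_toSet _)

end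

theorem stmt15_general {V : Type*} (G : SimpleGraph V) (hG : G.IsTree)
    (U : Set V)
    (H : G.Subgraph) (hH : IsConvexHullSubtree G U H)
    (R : G.Subgraph) (hR : IsRaySubgraph R) (hRH : R ≤ H)
    (hfin : (U \ R.verts).Finite) :
    IsAlmostRaySubgraph H := by
  obtain ⟨hHtree, hUH, hHmin⟩ := hH
  obtain ⟨v, hvR⟩ := hR.connected.nonempty
  obtain ⟨T₀, hT₀H, hT₀, hvT₀, hUT₀, hT₀fin⟩ :=
    Subgraph.Connected.exists_finite_connected_le (.mk hHtree.connected) (hRH.1 hvR) hfin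
      (Set.sdiff_subset.trans hUH)
  have hT₀R : (T₀ ⊔ R).coe.IsTree :=
    ⟨(Subgraph.connected_sup hT₀.preconnected hR.connected.preconnected ⟨v, hvT₀, hvR⟩).coe,
      hG.isAcyclic.subgraph _⟩
  have hUT₀R : U ⊆ (T₀ ⊔ R).verts := fun u hu =>
    (Set.subset_sdiff_union U R.verts hu).imp (@hUT₀ u) id
  exact ⟨R, T₀, hR, ⟨hT₀fin, hT₀.coe, hG.isAcyclic.subgraph _⟩,
    le_antisymm (sup_le hT₀H hRH) (hHmin _ hT₀R hUT₀R)⟩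

/-- Let `H` be the convex hull of an infinite set `U` of vertices of a tree
`T`. If `R` is a ray which is a subgraph of `H` and `U \\ V(R)` is finite, then `H` is
almost a ray. -/
theorem stmt15 {V : Type*} (G : SimpleGraph V) (hG : G.IsTree)
    (U : Set V) (hU : U.Infinite)
    (H : G.Subgraph) (hH : IsConvexHullSubtree G U H)
    (R : G.Subgraph) (hR : IsRaySubgraph R) (hRH : R ≤ H)
    (hfin : (U \ R.verts).Finite) :
    IsAlmostRaySubgraph H :=
  stmt15_general G hG U H hH R hR hRH hfin
end
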